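/- arXiv:1202.2960 — 9 statements merged into one kernel-verified Lean document; each statement's English description precedes it below -/
import Mathlib

section
/- Let a ∈ ℝ, b = a + k with k ∈ ℕ, k ≥ 2, 𝕋 = {a, a+1, …, b}, 𝕋^κ = {a, …, b−1}, σ(t) = t+1, ρ(t) = t−1, and Δφ(t) = φ(t+1) − φ(t). Let f : 𝕋 → ℝ and ν ≥ 0. Then for all t ∈ 𝕋^κ: ( _tΔ_{ρ(b)}^{−ν} Δf )(t) = (ν/Γ(ν+1)) (b+ν−σ(t))^{(ν−1)} f(b) + Δ( t ↦ ( _tΔ_b^{−ν} f )(t) )(t), where x^{(y)} := Γ(x+1)/Γ(x+1−y), the right fractional sum of order ν > 0 is ( _tΔ_b^{−ν} g )(t) = (1/Γ(ν)) Σ_{s=t}^{b} (s+ν−σ(t))^{(ν−1)} g(s) (sum over s ∈ 𝕋 in steps of 1), and ( _tΔ_b^{0} g )(t) = g(t). -/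
/-- The factorial function `x^{(y)} = Γ(x+1)/Γ(x+1−y)`. -/
noncomputable def ffac (x y : ℝ) : ℝ := Real.Gamma (x + 1) / Real.Gamma (x + 1 - y)

/-- The right fractional sum `( _tΔ_c^{−ν} g )(t)` on `𝕋 = {a, a+1, …}`,
where `t = a + i`, the right endpoint is `c = a + m`, `σ(t) = t + 1`;
for `ν = 0` it is `g(t)`. -/
noncomputable def rsum (a ν : ℝ) (g : ℝ → ℝ) (i m : ℕ) : ℝ :=
  if ν = 0 then g (a + i)
  else (1 / Real.Gamma ν) *
    ∑ j ∈ Finset.Icc i m, ffac ((a + j) + ν - (a + i + 1)) (ν - 1) * g (a + j)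

/-- for `f : 𝕋 → ℝ`, `ν ≥ 0` and all `t = a + i ∈ 𝕋^κ`,
`( _tΔ_{ρ(b)}^{−ν} Δf )(t) = (ν/Γ(ν+1)) (b+ν−σ(t))^{(ν−1)} f(b) + Δ( t ↦ ( _tΔ_b^{−ν} f )(t) )(t)`,
where `b = a + k`, `k ≥ 2`, `ρ(b) = b − 1`, `Δφ(t) = φ(t+1) − φ(t)`. -/
theorem stmt2 (a : ℝ) (k : ℕ) (hk : 2 ≤ k) (ν : ℝ) (hν : 0 ≤ ν) (f : ℝ → ℝ)
    (i : ℕ) (hi : i < k) :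
    rsum a ν (fun s => f (s + 1) - f s) i (k - 1)
      = ν / Real.Gamma (ν + 1) * ffac ((a + k) + ν - (a + i + 1)) (ν - 1) * f (a + k)
        + (rsum a ν f (i + 1) k - rsum a ν f i k) := by
  rcases eq_or_lt_of_le hν with h0 | hpos
  · simp only [rsum, ← h0, if_pos rfl]
    push_cast
    ring
  · have hne : ν ≠ 0 := ne_of_gt hpos
    have hΓ : Real.Gamma ν ≠ 0 := (Real.Gamma_pos_of_pos hpos).ne'
    have hred : ν / Real.Gamma (ν + 1) = 1 / Real.Gamma ν := by
      rw [Real.Gamma_add_one hne]; field_simp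
    simp only [rsum, if_neg hne]
    rw [hred]
    have h2 : ∑ j ∈ Finset.Icc (i+1) k, ffac ((a+j)+ν-(a+(i+1:ℕ)+1)) (ν-1) * f (a+j)
        = ∑ j ∈ Finset.Icc i (k-1), ffac ((a+j)+ν-(a+i+1)) (ν-1) * f (a+j+1) := by
      rw [show Finset.Icc (i+1) k = Finset.map (addRightEmbedding 1) (Finset.Icc i (k-1)) by
        rw [Finset.map_add_right_Icc]; congr 1; omega, Finset.sum_map]
      apply Finset.sum_congr rfl
      intro j hj
      simp only [addRightEmbedding_apply]
      push_cast
      ring_nf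
    have h3 : ∑ j ∈ Finset.Icc i k, ffac ((a+j)+ν-(a+i+1)) (ν-1) * f (a+j)
        = (∑ j ∈ Finset.Icc i (k-1), ffac ((a+j)+ν-(a+i+1)) (ν-1) * f (a+j))
          + ffac ((a+k)+ν-(a+i+1)) (ν-1) * f (a+k) := by
      have hk' : k = (k-1) + 1 := by omega
      rw [hk', Finset.sum_Icc_succ_top (by omega : i ≤ (k-1)+1)]
      rw [← hk']
    rw [h2, h3]
    rw [show (∑ j ∈ Finset.Icc i (k-1), ffac ((a+j)+ν-(a+i+1)) (ν-1) * (f (a+j+1) - f (a+j)))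
      = (∑ j ∈ Finset.Icc i (k-1), ffac ((a+j)+ν-(a+i+1)) (ν-1) * f (a+j+1))
        - ∑ j ∈ Finset.Icc i (k-1), ffac ((a+j)+ν-(a+i+1)) (ν-1) * f (a+j) by
        rw [← Finset.sum_sub_distrib]; apply Finset.sum_congr rfl; intros; ring]
    ring
end

section
/- Let a ∈ ℝ, b = a + k with k ∈ ℕ, k ≥ 2, 𝕋 = {a, a+1, …, b}, 𝕋^κ = {a, …, b−1}. Fix 0 < α ≤ 1 and put μ = 1−α. Then for any real-valued functions f on 𝕋^κ and g on 𝕋: Σ_{t=a}^{b−1} f(t) ( _aΔ_t^α g )(t) = f(b−1) g(b) − f(a) g(a) + Σ_{t=a}^{b−2} ( _tΔ_{ρ(b)}^α f )(t) · g(σ(t)) + (μ/Γ(μ+1)) g(a) [ Σ_{t=a}^{b−1} (t+μ−a)^{(μ−1)} f(t) − Σ_{t=a+1}^{b−1} (t+μ−a−1)^{(μ−1)} f(t) ] (fractional summation by parts). -/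
/-- The left fractional sum `( _aΔ_t^{−ν} g )(t)` at `t = a + i` on
`𝕋 = {a, a+1, …}`; for `ν = 0` it is `g(t)`. -/
noncomputable def lsum (a ν : ℝ) (g : ℝ → ℝ) (i : ℕ) : ℝ :=
  if ν = 0 then g (a + i)
  else (1 / Real.Gamma ν) *
    ∑ j ∈ Finset.range (i + 1), ffac ((a + i) + ν - (a + j + 1)) (ν - 1) * g (a + j)

open Finset

-- L1: expand the left difference
lemma L1 (c f g : ℕ → ℝ) (hc0 : c 0 = 1) (k : ℕ) :
    ∑ i ∈ range k, f i * ((∑ j ∈ range (i+1+1), c (i+1-j) * g j) - ∑ j ∈ range (i+1), c (i-j) * g j)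
      = ∑ i ∈ range k, f i * g (i+1)
        + ∑ i ∈ range k, ∑ j ∈ range (i+1), (c (i+1-j) - c (i-j)) * f i * g j := by
  rw [← Finset.sum_add_distrib]
  refine Finset.sum_congr rfl fun i _ => ?_
  rw [Finset.sum_range_succ]
  have : i + 1 - (i+1) = 0 := by omega
  rw [this, hc0]
  have h2 : ∑ j ∈ range (i+1), (c (i+1-j) - c (i-j)) * f i * g j
      = f i * ((∑ j ∈ range (i+1), c (i+1-j) * g j) - ∑ j ∈ range (i+1), c (i-j) * g j) := by
    rw [← Finset.sum_sub_distrib, Finset.mul_sum]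
    exact Finset.sum_congr rfl fun j _ => by ring
  rw [h2]; ring

-- L2: split j = 0 and swap
lemma L2 (c f g : ℕ → ℝ) (k : ℕ) (hk : 1 ≤ k) :
    ∑ i ∈ range k, ∑ j ∈ range (i+1), (c (i+1-j) - c (i-j)) * f i * g j
      = (∑ i ∈ range k, (c (i+1) - c i) * f i) * g 0
        + ∑ j ∈ Finset.Ico 1 k, ∑ i ∈ Finset.Icc j (k-1), (c (i-j+1) - c (i-j)) * f i * g j := by
  have step : ∀ i ∈ range k, ∑ j ∈ range (i+1), (c (i+1-j) - c (i-j)) * f i * g j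
      = (c (i+1) - c i) * f i * g 0 + ∑ j ∈ Finset.Icc 1 i, (c (i+1-j) - c (i-j)) * f i * g j := by
    intro i _
    rw [Finset.range_eq_Ico, Finset.sum_eq_sum_Ico_succ_bot (by omega)]
    simp [Finset.Ico_add_one_right_eq_Icc]
  rw [Finset.sum_congr rfl step, Finset.sum_add_distrib, ← Finset.sum_mul]
  congr 1
  rw [Finset.sum_comm' (t' := Finset.Ico 1 k) (s' := fun j => Finset.Icc j (k-1))]
  · refine Finset.sum_congr rfl fun j hj => Finset.sum_congr rfl fun i hi => ?_
    simp only [Finset.mem_Ico, Finset.mem_Icc] at hj hi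
    have h1 : i + 1 - j = i - j + 1 := by omega
    rw [h1]
  · intro i j
    simp only [Finset.mem_range, Finset.mem_Icc, Finset.mem_Ico]
    omega

-- L3: expand the right difference and reindex
lemma L3 (c f g : ℕ → ℝ) (hc0 : c 0 = 1) (k : ℕ) (hk : 1 ≤ k) :
    ∑ i ∈ range (k-1),
        ((∑ j ∈ Finset.Icc i (k-1), c (j-i) * f j)
          - ∑ j ∈ Finset.Icc (i+1) (k-1), c (j-i-1) * f j) * g (i+1)
      = ∑ i ∈ range (k-1), f i * g (i+1)
        + ∑ j ∈ Finset.Ico 1 k, ∑ i ∈ Finset.Icc j (k-1), (c (i-j+1) - c (i-j)) * f i * g j := by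
  have step : ∀ i ∈ range (k-1),
      ((∑ j ∈ Finset.Icc i (k-1), c (j-i) * f j)
        - ∑ j ∈ Finset.Icc (i+1) (k-1), c (j-i-1) * f j) * g (i+1)
      = f i * g (i+1) + ∑ j ∈ Finset.Icc (i+1) (k-1), (c (j-i) - c (j-i-1)) * f j * g (i+1) := by
    intro i hi
    rw [Finset.mem_range] at hi
    have hik : i ≤ k - 1 := by omega
    have hsplit : ∑ j ∈ Finset.Icc i (k-1), c (j-i) * f j
        = c 0 * f i + ∑ j ∈ Finset.Icc (i+1) (k-1), c (j-i) * f j := by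
      rw [← Finset.Ioc_insert_left hik, Finset.sum_insert (by simp), Nat.sub_self,
        Finset.Icc_add_one_left_eq_Ioc]
    rw [hsplit, hc0]
    have h2 : ∑ j ∈ Finset.Icc (i+1) (k-1), (c (j-i) - c (j-i-1)) * f j * g (i+1)
        = ((∑ j ∈ Finset.Icc (i+1) (k-1), c (j-i) * f j)
            - ∑ j ∈ Finset.Icc (i+1) (k-1), c (j-i-1) * f j) * g (i+1) := by
      rw [← Finset.sum_sub_distrib, Finset.sum_mul]
      exact Finset.sum_congr rfl fun j _ => by ring
    rw [h2]; ring
  rw [Finset.sum_congr rfl step, Finset.sum_add_distrib]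
  congr 1
  rw [Finset.sum_Ico_eq_sum_range]
  refine Finset.sum_congr rfl fun i hi => ?_
  rw [Finset.mem_range] at hi
  have e1 : 1 + i = i + 1 := by omega
  rw [e1]
  refine Finset.sum_congr rfl fun j hj => ?_
  rw [Finset.mem_Icc] at hj
  have e2 : j - (i+1) + 1 = j - i := by omega
  have e3 : j - (i+1) = j - i - 1 := by omega
  rw [e2, e3]

-- L4
lemma L4 (c f : ℕ → ℝ) (k : ℕ) (hk : 1 ≤ k) :
    (∑ i ∈ range k, c (i+1) * f i) - ∑ i ∈ Finset.Ico 1 k, c i * f i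
      = c 1 * f 0 + ∑ i ∈ Finset.Ico 1 k, (c (i+1) - c i) * f i := by
  rw [Finset.range_eq_Ico, Finset.sum_eq_sum_Ico_succ_bot (by omega)]
  rw [show (∑ i ∈ Finset.Ico 1 k, (c (i+1) - c i) * f i)
      = (∑ i ∈ Finset.Ico 1 k, c (i+1) * f i) - ∑ i ∈ Finset.Ico 1 k, c i * f i by
    rw [← Finset.sum_sub_distrib]; exact Finset.sum_congr rfl fun i _ => by ring]
  ring

-- key abstract identity
lemma key (c f g : ℕ → ℝ) (hc0 : c 0 = 1) (k : ℕ) (hk : 1 ≤ k) :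
    ∑ i ∈ range k, f i * ((∑ j ∈ range (i+1+1), c (i+1-j) * g j) - ∑ j ∈ range (i+1), c (i-j) * g j)
      = f (k-1) * g k - f 0 * g 0
        + ∑ i ∈ range (k-1),
            ((∑ j ∈ Finset.Icc i (k-1), c (j-i) * f j)
              - ∑ j ∈ Finset.Icc (i+1) (k-1), c (j-i-1) * f j) * g (i+1)
        + g 0 * ((∑ i ∈ range k, c (i+1) * f i) - ∑ i ∈ Finset.Ico 1 k, c i * f i) := by
  rw [L1 c f g hc0 k, L2 c f g k hk, L3 c f g hc0 k hk, L4 c f k hk]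
  have hs1 : ∑ i ∈ range k, f i * g (i+1)
      = (∑ i ∈ range (k-1), f i * g (i+1)) + f (k-1) * g k := by
    have : k = (k-1) + 1 := by omega
    rw [this, Finset.sum_range_succ]
    rw [← this]
  have hs2 : ∑ i ∈ range k, (c (i+1) - c i) * f i
      = (c 1 - 1) * f 0 + ∑ i ∈ Finset.Ico 1 k, (c (i+1) - c i) * f i := by
    rw [Finset.range_eq_Ico, Finset.sum_eq_sum_Ico_succ_bot (by omega), hc0]
  rw [hs1, hs2]
  ring

-- Abel summation for the μ = 0 case
lemma abel (F G : ℕ → ℝ) (k : ℕ) (hk : 1 ≤ k) :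
    ∑ i ∈ range k, F i * (G (i+1) - G i)
      = F (k-1) * G k - F 0 * G 0 + ∑ i ∈ range (k-1), (-(F (i+1) - F i)) * G (i+1) := by
  induction k, hk using Nat.le_induction with
  | base => simp; ring
  | succ n hn ih =>
    obtain ⟨m, rfl⟩ : ∃ m, n = m + 1 := ⟨n - 1, by omega⟩
    simp only [Nat.add_sub_cancel] at ih ⊢
    rw [Finset.sum_range_succ, ih, Finset.sum_range_succ]
    ring

noncomputable def Cc (μ : ℝ) (n : ℕ) : ℝ :=
  Real.Gamma (n + μ) / (Real.Gamma (n + 1) * Real.Gamma μ)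

lemma ffac_eq (μ : ℝ) {i j : ℕ} (h : j ≤ i) (a : ℝ) :
    ffac ((a + i) + μ - (a + j + 1)) (μ - 1)
      = Real.Gamma (((i-j : ℕ) : ℝ) + μ) / Real.Gamma (((i-j:ℕ) : ℝ) + 1) := by
  unfold ffac
  have e1 : a + (i:ℝ) + μ - (a + j + 1) + 1 = ((i-j:ℕ) : ℝ) + μ := by
    rw [Nat.cast_sub h]; ring
  rw [e1]
  congr 1
  ring

lemma GammaNat_ne (n : ℕ) : Real.Gamma ((n:ℝ) + 1) ≠ 0 :=
  (Real.Gamma_pos_of_pos (by positivity)).ne'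

lemma Cc_mul (μ : ℝ) (hG : Real.Gamma μ ≠ 0) (n : ℕ) :
    Real.Gamma μ * Cc μ n = Real.Gamma ((n:ℝ) + μ) / Real.Gamma ((n:ℝ) + 1) := by
  rw [Cc]
  field_simp

lemma Cc_zero (μ : ℝ) (hG : Real.Gamma μ ≠ 0) : Cc μ 0 = 1 := by
  rw [Cc]
  simp [Real.Gamma_one, div_self hG]

lemma lsum_eq (a μ : ℝ) (hμ : μ ≠ 0) (hG : Real.Gamma μ ≠ 0) (g : ℝ → ℝ) (i : ℕ) :
    lsum a μ g i = ∑ j ∈ Finset.range (i+1), Cc μ (i-j) * g (a+j) := by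
  rw [lsum, if_neg hμ, Finset.mul_sum]
  refine Finset.sum_congr rfl fun j hj => ?_
  rw [Finset.mem_range] at hj
  have h : j ≤ i := by omega
  rw [ffac_eq μ h a, Cc]
  field_simp

lemma rsum_eq (a μ : ℝ) (hμ : μ ≠ 0) (hG : Real.Gamma μ ≠ 0) (f : ℝ → ℝ) (i m : ℕ) :
    rsum a μ f i m = ∑ j ∈ Finset.Icc i m, Cc μ (j-i) * f (a+j) := by
  rw [rsum, if_neg hμ, Finset.mul_sum]
  refine Finset.sum_congr rfl fun j hj => ?_
  rw [Finset.mem_Icc] at hj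
  have h : i ≤ j := hj.1
  rw [ffac_eq μ h a, Cc]
  field_simp

lemma hf1 (a μ : ℝ) (hG : Real.Gamma μ ≠ 0) (i : ℕ) :
    ffac ((a + (i:ℝ)) + μ - a) (μ - 1) = Real.Gamma μ * Cc μ (i+1) := by
  rw [Cc_mul μ hG (i+1)]
  unfold ffac
  have e1 : a + (i:ℝ) + μ - a + 1 = ((i+1:ℕ):ℝ) + μ := by push_cast; ring
  rw [e1]
  congr 1
  push_cast; ring

lemma hf2 (a μ : ℝ) (hG : Real.Gamma μ ≠ 0) (i : ℕ) :
    ffac ((a + (i:ℝ)) + μ - (a+1)) (μ - 1) = Real.Gamma μ * Cc μ i := by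
  rw [Cc_mul μ hG i]
  unfold ffac
  have e1 : a + (i:ℝ) + μ - (a+1) + 1 = (i:ℝ) + μ := by ring
  rw [e1]
  congr 1
  ring

lemma bridge (a μ : ℝ) (hμ : μ ≠ 0) (hG : Real.Gamma μ ≠ 0) (k : ℕ) (hk : 1 ≤ k)
    (f g : ℝ → ℝ) :
    ∑ i ∈ Finset.range k, f (a + i) * (lsum a μ g (i + 1) - lsum a μ g i)
      = f (a + ((k - 1 : ℕ) : ℝ)) * g (a + k) - f a * g a
        + ∑ i ∈ Finset.range (k - 1),
            (-(rsum a μ f (i + 1) (k - 1) - rsum a μ f i (k - 1))) * g (a + i + 1)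
        + 1 / Real.Gamma μ * g a *
            (∑ i ∈ Finset.range k, ffac ((a + i) + μ - a) (μ - 1) * f (a + i)
              - ∑ i ∈ Finset.Ico 1 k, ffac ((a + i) + μ - (a + 1)) (μ - 1) * f (a + i)) := by
  have KEY := key (Cc μ) (fun n => f (a + n)) (fun n => g (a + n)) (Cc_zero μ hG) k hk
  simp only [Nat.sub_sub, Nat.cast_zero, add_zero, Nat.cast_add, Nat.cast_one,
    ← add_assoc] at KEY
  simp only [lsum_eq a μ hμ hG g, rsum_eq a μ hμ hG f, neg_sub]
  rw [KEY]
  congr 1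
  simp only [hf1 a μ hG, hf2 a μ hG, mul_assoc, ← Finset.mul_sum]
  field_simp


/-- fractional summation by parts:
for `0 < α ≤ 1`, `μ = 1 − α`, `f` on `𝕋^κ` and `g` on `𝕋 = {a, …, a+k}` (`k ≥ 2`),
`Σ_{t=a}^{b−1} f(t)(_aΔ_t^α g)(t)
 = f(b−1)g(b) − f(a)g(a) + Σ_{t=a}^{b−2} (_tΔ_{ρ(b)}^α f)(t) g(σ(t))
   + (μ/Γ(μ+1)) g(a) [ Σ_{t=a}^{b−1} (t+μ−a)^{(μ−1)} f(t) − Σ_{t=a+1}^{b−1} (t+μ−a−1)^{(μ−1)} f(t) ]`,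
where `(_aΔ_t^α g)(t) = Δ(_aΔ_t^{−μ} g)(t)` and
`(_tΔ_{ρ(b)}^α f)(t) = −Δ(_tΔ_{ρ(b)}^{−μ} f)(t)`. -/
theorem stmt3 (a : ℝ) (k : ℕ) (hk : 2 ≤ k) (α μ : ℝ) (hα0 : 0 < α) (hα1 : α ≤ 1)
    (hμ : μ = 1 - α) (f g : ℝ → ℝ) :
    ∑ i ∈ Finset.range k, f (a + i) * (lsum a μ g (i + 1) - lsum a μ g i)
      = f (a + ((k - 1 : ℕ) : ℝ)) * g (a + k) - f a * g a
        + ∑ i ∈ Finset.range (k - 1),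
            (-(rsum a μ f (i + 1) (k - 1) - rsum a μ f i (k - 1))) * g (a + i + 1)
        + μ / Real.Gamma (μ + 1) * g a *
            (∑ i ∈ Finset.range k, ffac ((a + i) + μ - a) (μ - 1) * f (a + i)
              - ∑ i ∈ Finset.Ico 1 k, ffac ((a + i) + μ - (a + 1)) (μ - 1) * f (a + i)) := by

  by_cases h0 : μ = 0
  · subst h0
    have ABEL := abel (fun n => f (a + n)) (fun n => g (a + n)) k (by omega)
    simp only [Nat.cast_add, Nat.cast_one, Nat.cast_zero, add_zero, ← add_assoc] at ABEL
    simp only [lsum, rsum, eq_self_iff_true, if_true, Nat.cast_add, Nat.cast_one, ← add_assoc]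
    rw [ABEL]
    norm_num
  · have hμpos : 0 < μ := by
      rcases lt_or_eq_of_le hα1 with h | h
      · rw [hμ]; linarith
      · exfalso; apply h0; rw [hμ, ← h]; ring
    have hG : Real.Gamma μ ≠ 0 := (Real.Gamma_pos_of_pos hμpos).ne'
    have hcoef : μ / Real.Gamma (μ + 1) = 1 / Real.Gamma μ := by
      rw [Real.Gamma_add_one h0]
      field_simp
    rw [hcoef]
    exact bridge a μ h0 hG k (by omega) f g
end

section
/- Let a ∈ ℝ, b = a + k with k ∈ ℕ, k ≥ 2, 𝕋 = {a, a+1, …, b}, 𝕋^κ = {a, …, b−1}, 𝕋^{κ²} = {a, …, b−2}. Fix α, β ∈ (0,1], A, B ∈ ℝ, and let L(t,u,v,w) : 𝕋^κ × ℝ³ → ℝ be such that the second-order partial derivatives L_{uu}, L_{uv}, L_{uw}, L_{vw}, L_{vv}, L_{ww} exist and are continuous. Define 𝓛(y) = Σ_{t=a}^{b−1} L(t, y(σ(t)), ( _aΔ_t^α y )(t), ( _tΔ_b^β y )(t)). If ỹ : 𝕋 → ℝ with ỹ(a) = A and ỹ(b) = B is a local minimizer of 𝓛 among functions y : 𝕋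 → ℝ with y(a) = A, y(b) = B (local with respect to the norm ‖f‖ = max_{t∈𝕋^κ}|f(σ(t))| + max_{t∈𝕋^κ}|( _aΔ_t^α f )(t)| + max_{t∈𝕋^κ}|( _tΔ_b^β f )(t)|), then for all t ∈ 𝕋^{κ²}: L_u[ỹ](t) + ( _tΔ_{ρ(b)}^α (L_v[ỹ]) )(t) + ( _aΔ_t^β (L_w[ỹ]) )(t) = 0, where [y](s) = (s, y(σ(s)), ( _aΔ_s^α y )(s), ( _sΔ_b^β y )(s)) and L_u, L_v, L_w are the partial derivatives of L with respect to its second, third and fourth arguments. -/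
/-- The left fractional sum `( _aΔ_t^{−ν} g )(t)` at `t = a + i`, for a function
`g` on `𝕋 = {a, a+1, …}` represented by the sequence `g : ℕ → ℝ`, `g j = g(a + j)`;
for `ν = 0` it is `g(t)`. -/
noncomputable def lsumS (a ν : ℝ) (g : ℕ → ℝ) (i : ℕ) : ℝ :=
  if ν = 0 then g i
  else (1 / Real.Gamma ν) *
    ∑ j ∈ Finset.range (i + 1), ffac ((a + i) + ν - (a + j + 1)) (ν - 1) * g j

/-- The right fractional sum `( _tΔ_c^{−ν} g )(t)` at `t = a + i` with right
endpoint `c = a + m`; for `ν = 0` it is `g(t)`. -/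
noncomputable def rsumS (a ν : ℝ) (g : ℕ → ℝ) (i m : ℕ) : ℝ :=
  if ν = 0 then g i
  else (1 / Real.Gamma ν) *
    ∑ j ∈ Finset.Icc i m, ffac ((a + j) + ν - (a + i + 1)) (ν - 1) * g j

/-- The left fractional difference `( _aΔ_t^α g )(t) = Δ( _aΔ_t^{−(1−α)} g )(t)`
at `t = a + i`. -/
noncomputable def ldiffS (a α : ℝ) (g : ℕ → ℝ) (i : ℕ) : ℝ :=
  lsumS a (1 - α) g (i + 1) - lsumS a (1 - α) g i

/-- The right fractional difference `( _tΔ_c^α g )(t) = −Δ( _tΔ_c^{−(1−α)} g )(t)`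
at `t = a + i` with right endpoint `c = a + m`. -/
noncomputable def rdiffS (a α : ℝ) (g : ℕ → ℝ) (i m : ℕ) : ℝ :=
  -(rsumS a (1 - α) g (i + 1) m - rsumS a (1 - α) g i m)

/-- The norm `‖f‖ = max_{t∈𝕋^κ}|f(σ(t))| + max|(_aΔ_t^α f)(t)| + max|(_tΔ_b^β f)(t)|`. -/
noncomputable def discNorm (a : ℝ) (k : ℕ) (α β : ℝ) (f : ℕ → ℝ) : ℝ :=
  (⨆ i : Fin k, |f ((i : ℕ) + 1)|) + (⨆ i : Fin k, |ldiffS a α f (i : ℕ)|)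
    + (⨆ i : Fin k, |rdiffS a β f (i : ℕ) k|)

lemma mvt' (f f' : ℝ → ℝ) (h : ∀ x, HasDerivAt f (f' x) x) (x y : ℝ) :
    ∃ ξ ∈ Set.uIcc x y, f y - f x = f' ξ * (y - x) := by
  rcases lt_trichotomy x y with hxy | rfl | hxy
  · obtain ⟨c, hc, hc'⟩ := exists_hasDerivAt_eq_slope f f' hxy
      (fun z _ => (h z).continuousAt.continuousWithinAt) (fun z _ => h z)
    refine ⟨c, ?_, ?_⟩
    · rw [Set.uIcc_of_le hxy.le]; exact Set.Ioo_subset_Icc_self hc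
    · rw [eq_div_iff (by linarith : y - x ≠ 0)] at hc'; linarith [hc']
  · exact ⟨x, Set.left_mem_uIcc, by ring⟩
  · obtain ⟨c, hc, hc'⟩ := exists_hasDerivAt_eq_slope f f' hxy
      (fun z _ => (h z).continuousAt.continuousWithinAt) (fun z _ => h z)
    refine ⟨c, ?_, ?_⟩
    · rw [Set.uIcc_comm, Set.uIcc_of_le hxy.le]; exact Set.Ioo_subset_Icc_self hc
    · rw [eq_div_iff (by linarith : x - y ≠ 0)] at hc'; linarith [hc']

lemma uIcc_dist (x y ζ : ℝ) (h : ζ ∈ Set.uIcc x y) : |ζ - x| ≤ |y - x| := by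
  rw [Set.mem_uIcc] at h
  have h1 := le_abs_self (y - x)
  have h2 := neg_abs_le (y - x)
  rcases h with ⟨ha, hb⟩ | ⟨ha, hb⟩ <;> rw [abs_sub_le_iff] <;> constructor <;> linarith

lemma incr1 (g g' : ℝ → ℝ) (h : ∀ x, HasDerivAt g (g' x) x) (x y M : ℝ)
    (hM : ∀ ξ ∈ Set.uIcc x y, |g' ξ| ≤ M) : |g y - g x| ≤ M * |y - x| := by
  obtain ⟨ξ, hξ, he⟩ := mvt' g g' h x y
  rw [he, abs_mul]
  exact mul_le_mul_of_nonneg_right (hM ξ hξ) (abs_nonneg _)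

lemma taylor2 (L Lu Lv Lw Luu Luv Luw Lvv Lvw Lww : ℝ → ℝ → ℝ → ℝ)
    (hLu : ∀ u v w, HasDerivAt (fun x => L x v w) (Lu u v w) u)
    (hLv : ∀ u v w, HasDerivAt (fun x => L u x w) (Lv u v w) v)
    (hLw : ∀ u v w, HasDerivAt (fun x => L u v x) (Lw u v w) w)
    (hLuu : ∀ u v w, HasDerivAt (fun x => Lu x v w) (Luu u v w) u)
    (hLuv : ∀ u v w, HasDerivAt (fun x => Lu u x w) (Luv u v w) v)
    (hLuw : ∀ u v w, HasDerivAt (fun x => Lu u v x) (Luw u v w) w)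
    (hLvv : ∀ u v w, HasDerivAt (fun x => Lv u x w) (Lvv u v w) v)
    (hLvw : ∀ u v w, HasDerivAt (fun x => Lv u v x) (Lvw u v w) w)
    (hLww : ∀ u v w, HasDerivAt (fun x => Lw u v x) (Lww u v w) w)
    (hCuu : Continuous fun p : ℝ × ℝ × ℝ => Luu p.1 p.2.1 p.2.2)
    (hCuv : Continuous fun p : ℝ × ℝ × ℝ => Luv p.1 p.2.1 p.2.2)
    (hCuw : Continuous fun p : ℝ × ℝ × ℝ => Luw p.1 p.2.1 p.2.2)
    (hCvv : Continuous fun p : ℝ × ℝ × ℝ => Lvv p.1 p.2.1 p.2.2)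
    (hCvw : Continuous fun p : ℝ × ℝ × ℝ => Lvw p.1 p.2.1 p.2.2)
    (hCww : Continuous fun p : ℝ × ℝ × ℝ => Lww p.1 p.2.1 p.2.2)
    (u v w p q r : ℝ) :
    ∃ C, 0 ≤ C ∧ ∀ ε : ℝ, |ε| ≤ 1 →
      |L (u + ε * p) (v + ε * q) (w + ε * r) - L u v w
        - ε * (p * Lu u v w + q * Lv u v w + r * Lw u v w)| ≤ C * ε ^ 2 := by
  obtain ⟨R, hR⟩ : ∃ x : ℝ, x = |p| + |q| + |r| := ⟨_, rfl⟩
  have hR0 : 0 ≤ R := by rw [hR]; positivity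
  obtain ⟨K, hK⟩ : ∃ K : Set (ℝ × ℝ × ℝ),
      K = Set.Icc (u - R, v - R, w - R) (u + R, v + R, w + R) := ⟨_, rfl⟩
  have hKc : IsCompact K := by rw [hK]; exact isCompact_Icc
  obtain ⟨M1, hM1⟩ := hKc.exists_bound_of_continuousOn hCuu.continuousOn
  obtain ⟨M2, hM2⟩ := hKc.exists_bound_of_continuousOn hCuv.continuousOn
  obtain ⟨M3, hM3⟩ := hKc.exists_bound_of_continuousOn hCuw.continuousOn
  obtain ⟨M4, hM4⟩ := hKc.exists_bound_of_continuousOn hCvv.continuousOn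
  obtain ⟨M5, hM5⟩ := hKc.exists_bound_of_continuousOn hCvw.continuousOn
  obtain ⟨M6, hM6⟩ := hKc.exists_bound_of_continuousOn hCww.continuousOn
  obtain ⟨M, hM⟩ : ∃ x : ℝ,
      x = max 0 (max (max M1 M2) (max (max M3 M4) (max M5 M6))) := ⟨_, rfl⟩
  have hM0 : 0 ≤ M := by rw [hM]; exact le_max_left _ _
  have hmem : ∀ x y z : ℝ, |x - u| ≤ R → |y - v| ≤ R → |z - w| ≤ R → (x, y, z) ∈ K := by
    intro x y z hx hy hz
    rw [abs_le] at hx hy hz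
    rw [hK]
    simp only [Set.mem_Icc, Prod.le_def]
    refine ⟨⟨by linarith [hx.1], by linarith [hy.1], by linarith [hz.1]⟩,
      ⟨by linarith [hx.2], by linarith [hy.2], by linarith [hz.2]⟩⟩
  have bLuu : ∀ x y z : ℝ, |x - u| ≤ R → |y - v| ≤ R → |z - w| ≤ R → |Luu x y z| ≤ M := by
    intro x y z hx hy hz
    have h := hM1 (x, y, z) (hmem x y z hx hy hz)
    rw [Real.norm_eq_abs] at h
    refine h.trans ?_
    rw [hM]; apply le_max_of_le_right; apply le_max_of_le_left; exact le_max_left _ _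
  have bLuv : ∀ x y z : ℝ, |x - u| ≤ R → |y - v| ≤ R → |z - w| ≤ R → |Luv x y z| ≤ M := by
    intro x y z hx hy hz
    have h := hM2 (x, y, z) (hmem x y z hx hy hz)
    rw [Real.norm_eq_abs] at h
    refine h.trans ?_
    rw [hM]; apply le_max_of_le_right; apply le_max_of_le_left; exact le_max_right _ _
  have bLuw : ∀ x y z : ℝ, |x - u| ≤ R → |y - v| ≤ R → |z - w| ≤ R → |Luw x y z| ≤ M := by
    intro x y z hx hy hz
    have h := hM3 (x, y, z) (hmem x y z hx hy hz)
    rw [Real.norm_eq_abs] at h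
    refine h.trans ?_
    rw [hM]; apply le_max_of_le_right; apply le_max_of_le_right
    apply le_max_of_le_left; exact le_max_left _ _
  have bLvv : ∀ x y z : ℝ, |x - u| ≤ R → |y - v| ≤ R → |z - w| ≤ R → |Lvv x y z| ≤ M := by
    intro x y z hx hy hz
    have h := hM4 (x, y, z) (hmem x y z hx hy hz)
    rw [Real.norm_eq_abs] at h
    refine h.trans ?_
    rw [hM]; apply le_max_of_le_right; apply le_max_of_le_right
    apply le_max_of_le_left; exact le_max_right _ _
  have bLvw : ∀ x y z : ℝ, |x - u| ≤ R → |y - v| ≤ R → |z - w| ≤ R → |Lvw x y z| ≤ M := by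
    intro x y z hx hy hz
    have h := hM5 (x, y, z) (hmem x y z hx hy hz)
    rw [Real.norm_eq_abs] at h
    refine h.trans ?_
    rw [hM]; apply le_max_of_le_right; apply le_max_of_le_right
    apply le_max_of_le_right; exact le_max_left _ _
  have bLww : ∀ x y z : ℝ, |x - u| ≤ R → |y - v| ≤ R → |z - w| ≤ R → |Lww x y z| ≤ M := by
    intro x y z hx hy hz
    have h := hM6 (x, y, z) (hmem x y z hx hy hz)
    rw [Real.norm_eq_abs] at h
    refine h.trans ?_
    rw [hM]; apply le_max_of_le_right; apply le_max_of_le_right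
    apply le_max_of_le_right; exact le_max_right _ _
  refine ⟨9 * M * R * R, by positivity, ?_⟩
  intro ε hε
  have hpa : |ε * p| ≤ R * |ε| := by
    rw [abs_mul, hR]; nlinarith [abs_nonneg ε, abs_nonneg p, abs_nonneg q, abs_nonneg r]
  have hpb : |ε * q| ≤ R * |ε| := by
    rw [abs_mul, hR]; nlinarith [abs_nonneg ε, abs_nonneg p, abs_nonneg q, abs_nonneg r]
  have hpc : |ε * r| ≤ R * |ε| := by
    rw [abs_mul, hR]; nlinarith [abs_nonneg ε, abs_nonneg p, abs_nonneg q, abs_nonneg r]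
  have hRε : R * |ε| ≤ R := by nlinarith [abs_nonneg ε]
  have haR : |ε * p| ≤ R := hpa.trans hRε
  have hbR : |ε * q| ≤ R := hpb.trans hRε
  have hcR : |ε * r| ≤ R := hpc.trans hRε
  obtain ⟨ξ1, hξ1m, hξ1⟩ := mvt' (fun x => L x (v + ε * q) (w + ε * r))
    (fun x => Lu x (v + ε * q) (w + ε * r)) (fun x => hLu x _ _) u (u + ε * p)
  obtain ⟨ξ2, hξ2m, hξ2⟩ := mvt' (fun x => L u x (w + ε * r))
    (fun x => Lv u x (w + ε * r)) (fun x => hLv u x _) v (v + ε * q)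
  obtain ⟨ξ3, hξ3m, hξ3⟩ := mvt' (fun x => L u v x)
    (fun x => Lw u v x) (fun x => hLw u v x) w (w + ε * r)
  have hξ1x : |ξ1 - u| ≤ R * |ε| :=
    le_trans (by simpa using uIcc_dist u (u + ε * p) ξ1 hξ1m) hpa
  have hξ2x : |ξ2 - v| ≤ R * |ε| :=
    le_trans (by simpa using uIcc_dist v (v + ε * q) ξ2 hξ2m) hpb
  have hξ3x : |ξ3 - w| ≤ R * |ε| :=
    le_trans (by simpa using uIcc_dist w (w + ε * r) ξ3 hξ3m) hpc
  have hξ1d : |ξ1 - u| ≤ R := hξ1x.trans hRε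
  have hξ2d : |ξ2 - v| ≤ R := hξ2x.trans hRε
  have hξ3d : |ξ3 - w| ≤ R := hξ3x.trans hRε
  have hbε : |v + ε * q - v| ≤ R := by simpa using hbR
  have hcε : |w + ε * r - w| ≤ R := by simpa using hcR
  have D1 : |Lu ξ1 (v + ε * q) (w + ε * r) - Lu u v w| ≤ M * (3 * (R * |ε|)) := by
    have s1 : |Lu ξ1 (v + ε * q) (w + ε * r) - Lu u (v + ε * q) (w + ε * r)| ≤ M * |ξ1 - u| := by
      apply incr1 (fun x => Lu x (v + ε * q) (w + ε * r)) (fun x => Luu x (v + ε * q) (w + ε * r))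
        (fun x => hLuu x _ _)
      intro ζ hζ
      exact bLuu _ _ _ (le_trans (uIcc_dist u ξ1 ζ hζ) hξ1d) hbε hcε
    have s2 : |Lu u (v + ε * q) (w + ε * r) - Lu u v (w + ε * r)| ≤ M * |ε * q| := by
      have h := incr1 (fun x => Lu u x (w + ε * r)) (fun x => Luv u x (w + ε * r))
        (fun x => hLuv u x _) v (v + ε * q) M ?_
      · simpa using h
      · intro ζ hζ
        exact bLuv _ _ _ (by simpa using hR0)
          (le_trans (uIcc_dist v (v + ε * q) ζ hζ) hbε) hcε
    have s3 : |Lu u v (w + ε * r) - Lu u v w| ≤ M * |ε * r| := by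
      have h := incr1 (fun x => Lu u v x) (fun x => Luw u v x)
        (fun x => hLuw u v x) w (w + ε * r) M ?_
      · simpa using h
      · intro ζ hζ
        exact bLuw _ _ _ (by simpa using hR0) (by simpa using hR0)
          (le_trans (uIcc_dist w (w + ε * r) ζ hζ) hcε)
    have htr1 := abs_sub_le (Lu ξ1 (v + ε * q) (w + ε * r)) (Lu u (v + ε * q) (w + ε * r)) (Lu u v w)
    have htr2 := abs_sub_le (Lu u (v + ε * q) (w + ε * r)) (Lu u v (w + ε * r)) (Lu u v w)
    have e1 := mul_le_mul_of_nonneg_left hξ1x hM0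
    have e2 := mul_le_mul_of_nonneg_left hpb hM0
    have e3 := mul_le_mul_of_nonneg_left hpc hM0
    linarith
  have D2 : |Lv u ξ2 (w + ε * r) - Lv u v w| ≤ M * (3 * (R * |ε|)) := by
    have s2 : |Lv u ξ2 (w + ε * r) - Lv u v (w + ε * r)| ≤ M * |ξ2 - v| := by
      apply incr1 (fun x => Lv u x (w + ε * r)) (fun x => Lvv u x (w + ε * r))
        (fun x => hLvv u x _)
      intro ζ hζ
      exact bLvv _ _ _ (by simpa using hR0) (le_trans (uIcc_dist v ξ2 ζ hζ) hξ2d) hcε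
    have s3 : |Lv u v (w + ε * r) - Lv u v w| ≤ M * |ε * r| := by
      have h := incr1 (fun x => Lv u v x) (fun x => Lvw u v x)
        (fun x => hLvw u v x) w (w + ε * r) M ?_
      · simpa using h
      · intro ζ hζ
        exact bLvw _ _ _ (by simpa using hR0) (by simpa using hR0)
          (le_trans (uIcc_dist w (w + ε * r) ζ hζ) hcε)
    have htr := abs_sub_le (Lv u ξ2 (w + ε * r)) (Lv u v (w + ε * r)) (Lv u v w)
    have e1 := mul_le_mul_of_nonneg_left hξ2x hM0
    have e3 := mul_le_mul_of_nonneg_left hpc hM0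
    have e0 : 0 ≤ M * (R * |ε|) := by positivity
    linarith
  have D3 : |Lw u v ξ3 - Lw u v w| ≤ M * (3 * (R * |ε|)) := by
    have s3 : |Lw u v ξ3 - Lw u v w| ≤ M * |ξ3 - w| := by
      apply incr1 (fun x => Lw u v x) (fun x => Lww u v x) (fun x => hLww u v x)
      intro ζ hζ
      exact bLww _ _ _ (by simpa using hR0) (by simpa using hR0)
        (le_trans (uIcc_dist w ξ3 ζ hζ) hξ3d)
    have e1 := mul_le_mul_of_nonneg_left hξ3x hM0
    have e0 : 0 ≤ M * (R * |ε|) := by positivity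
    linarith
  have hEq : L (u + ε * p) (v + ε * q) (w + ε * r) - L u v w
      - ε * (p * Lu u v w + q * Lv u v w + r * Lw u v w)
      = (Lu ξ1 (v + ε * q) (w + ε * r) - Lu u v w) * (ε * p)
        + (Lv u ξ2 (w + ε * r) - Lv u v w) * (ε * q)
        + (Lw u v ξ3 - Lw u v w) * (ε * r) := by
    linear_combination hξ1 + hξ2 + hξ3
  rw [hEq]
  have m1 : |Lu ξ1 (v + ε * q) (w + ε * r) - Lu u v w| * |ε * p|
      ≤ (M * (3 * (R * |ε|))) * (R * |ε|) :=
    mul_le_mul D1 hpa (abs_nonneg _) (by positivity)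
  have m2 : |Lv u ξ2 (w + ε * r) - Lv u v w| * |ε * q|
      ≤ (M * (3 * (R * |ε|))) * (R * |ε|) :=
    mul_le_mul D2 hpb (abs_nonneg _) (by positivity)
  have m3 : |Lw u v ξ3 - Lw u v w| * |ε * r|
      ≤ (M * (3 * (R * |ε|))) * (R * |ε|) :=
    mul_le_mul D3 hpc (abs_nonneg _) (by positivity)
  have t1 := abs_add_le ((Lu ξ1 (v + ε * q) (w + ε * r) - Lu u v w) * (ε * p)
      + (Lv u ξ2 (w + ε * r) - Lv u v w) * (ε * q)) ((Lw u v ξ3 - Lw u v w) * (ε * r))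
  have t2 := abs_add_le ((Lu ξ1 (v + ε * q) (w + ε * r) - Lu u v w) * (ε * p))
      ((Lv u ξ2 (w + ε * r) - Lv u v w) * (ε * q))
  simp only [abs_mul] at t1 t2 m1 m2 m3
  have hsq : |ε| * |ε| = ε ^ 2 := by rw [abs_mul_abs_self]; ring
  have key : (M * (3 * (R * |ε|))) * (R * |ε|) = 3 * M * R * R * ε ^ 2 := by
    rw [← hsq]; ring
  linarith [m1, m2, m3, t1, t2]

lemma lsumS_lin (a ν : ℝ) (f g : ℕ → ℝ) (ε : ℝ) (i : ℕ) :
    lsumS a ν (fun j => f j + ε * g j) i = lsumS a ν f i + ε * lsumS a ν g i := by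
  unfold lsumS
  split_ifs with h
  · ring
  · rw [show (∑ j ∈ Finset.range (i + 1), ffac ((a + i) + ν - (a + j + 1)) (ν - 1)
        * (f j + ε * g j))
      = (∑ j ∈ Finset.range (i + 1), ffac ((a + i) + ν - (a + j + 1)) (ν - 1) * f j)
        + ε * ∑ j ∈ Finset.range (i + 1), ffac ((a + i) + ν - (a + j + 1)) (ν - 1) * g j from by
      rw [Finset.mul_sum, ← Finset.sum_add_distrib]
      exact Finset.sum_congr rfl fun j _ => by ring]
    ring

lemma rsumS_lin (a ν : ℝ) (f g : ℕ → ℝ) (ε : ℝ) (i m : ℕ) :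
    rsumS a ν (fun j => f j + ε * g j) i m = rsumS a ν f i m + ε * rsumS a ν g i m := by
  unfold rsumS
  split_ifs with h
  · ring
  · rw [show (∑ j ∈ Finset.Icc i m, ffac ((a + j) + ν - (a + i + 1)) (ν - 1)
        * (f j + ε * g j))
      = (∑ j ∈ Finset.Icc i m, ffac ((a + j) + ν - (a + i + 1)) (ν - 1) * f j)
        + ε * ∑ j ∈ Finset.Icc i m, ffac ((a + j) + ν - (a + i + 1)) (ν - 1) * g j from by
      rw [Finset.mul_sum, ← Finset.sum_add_distrib]
      exact Finset.sum_congr rfl fun j _ => by ring]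
    ring

lemma ldiffS_lin (a α : ℝ) (f g : ℕ → ℝ) (ε : ℝ) (i : ℕ) :
    ldiffS a α (fun j => f j + ε * g j) i = ldiffS a α f i + ε * ldiffS a α g i := by
  unfold ldiffS; rw [lsumS_lin, lsumS_lin]; ring

lemma rdiffS_lin (a α : ℝ) (f g : ℕ → ℝ) (ε : ℝ) (i m : ℕ) :
    rdiffS a α (fun j => f j + ε * g j) i m = rdiffS a α f i m + ε * rdiffS a α g i m := by
  unfold rdiffS; rw [rsumS_lin, rsumS_lin]; ring

lemma ldiffS_smul (a α : ℝ) (g : ℕ → ℝ) (ε : ℝ) (i : ℕ) :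
    ldiffS a α (fun j => ε * g j) i = ε * ldiffS a α g i := by
  have h := ldiffS_lin a α (fun _ => 0) g ε i
  have h0 : ldiffS a α (fun _ : ℕ => (0:ℝ)) i = 0 := by
    have h2 := ldiffS_lin a α (fun _ => 0) (fun _ => 0) (-1) i
    simp only [mul_zero, add_zero, neg_one_mul, neg_zero] at h2
    linarith
  simp only [zero_add] at h
  rw [h, h0]; ring

lemma rdiffS_smul (a α : ℝ) (g : ℕ → ℝ) (ε : ℝ) (i m : ℕ) :
    rdiffS a α (fun j => ε * g j) i m = ε * rdiffS a α g i m := by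
  have h := rdiffS_lin a α (fun _ => 0) g ε i m
  have h0 : rdiffS a α (fun _ : ℕ => (0:ℝ)) i m = 0 := by
    have h2 := rdiffS_lin a α (fun _ => 0) (fun _ => 0) (-1) i m
    simp only [mul_zero, add_zero, neg_one_mul, neg_zero] at h2
    linarith
  simp only [zero_add] at h
  rw [h, h0]; ring

lemma sup_abs_nonneg {k : ℕ} (hk : 0 < k) (g : ℕ → ℝ) :
    0 ≤ ⨆ i : Fin k, |g (i : ℕ)| := by
  haveI : Nonempty (Fin k) := ⟨⟨0, hk⟩⟩
  exact le_trans (abs_nonneg (g ((⟨0, hk⟩ : Fin k) : ℕ)))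
    (le_ciSup (f := fun i : Fin k => |g (i : ℕ)|)
      (Set.Finite.bddAbove (Set.finite_range _)) (⟨0, hk⟩ : Fin k))

lemma sup_abs_smul {k : ℕ} (hk : 0 < k) (ε : ℝ) (g : ℕ → ℝ) :
    (⨆ i : Fin k, |ε * g (i : ℕ)|) ≤ |ε| * ⨆ i : Fin k, |g (i : ℕ)| := by
  haveI : Nonempty (Fin k) := ⟨⟨0, hk⟩⟩
  apply ciSup_le
  intro i
  rw [abs_mul]
  exact mul_le_mul_of_nonneg_left
    (le_ciSup (f := fun i : Fin k => |g (i : ℕ)|)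
      (Set.Finite.bddAbove (Set.finite_range _)) i) (abs_nonneg ε)

lemma discNorm_nonneg (a : ℝ) {k : ℕ} (hk : 0 < k) (α β : ℝ) (f : ℕ → ℝ) :
    0 ≤ discNorm a k α β f := by
  unfold discNorm
  have h1 := sup_abs_nonneg hk (fun j => f (j + 1))
  have h2 := sup_abs_nonneg hk (fun j => ldiffS a α f j)
  have h3 := sup_abs_nonneg hk (fun j => rdiffS a β f j k)
  linarith

lemma discNorm_smul_le (a : ℝ) {k : ℕ} (hk : 0 < k) (α β : ℝ) (ε : ℝ) (f : ℕ → ℝ) :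
    discNorm a k α β (fun j => ε * f j) ≤ |ε| * discNorm a k α β f := by
  unfold discNorm
  have h1 := sup_abs_smul hk ε (fun j => f (j + 1))
  have h2 : (⨆ i : Fin k, |ldiffS a α (fun j => ε * f j) (i : ℕ)|)
      ≤ |ε| * ⨆ i : Fin k, |ldiffS a α f (i : ℕ)| := by
    have := sup_abs_smul hk ε (fun j => ldiffS a α f j)
    calc (⨆ i : Fin k, |ldiffS a α (fun j => ε * f j) (i : ℕ)|)
        = ⨆ i : Fin k, |ε * ldiffS a α f (i : ℕ)| := by
          congr 1; funext i; rw [ldiffS_smul]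
      _ ≤ _ := this
  have h3 : (⨆ i : Fin k, |rdiffS a β (fun j => ε * f j) (i : ℕ) k|)
      ≤ |ε| * ⨆ i : Fin k, |rdiffS a β f (i : ℕ) k| := by
    have := sup_abs_smul hk ε (fun j => rdiffS a β f j k)
    calc (⨆ i : Fin k, |rdiffS a β (fun j => ε * f j) (i : ℕ) k|)
        = ⨆ i : Fin k, |ε * rdiffS a β f (i : ℕ) k| := by
          congr 1; funext i; rw [rdiffS_smul]
      _ ≤ _ := this
  linarith

lemma Gzero (G C δ : ℝ) (hδ : 0 < δ) (hC : 0 ≤ C)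
    (h : ∀ ε : ℝ, |ε| < δ → 0 ≤ ε * G + C * ε ^ 2) : G = 0 := by
  by_contra hG
  have hG' : 0 < |G| := abs_pos.mpr hG
  have key : ∀ ε : ℝ, 0 < ε → ε < δ → |G| ≤ C * ε := by
    intro ε hε1 hε2
    have hp := h ε (by rwa [abs_of_pos hε1])
    have hn := h (-ε) (by rwa [abs_neg, abs_of_pos hε1])
    rw [abs_le]
    constructor <;> nlinarith
  set ε₀ : ℝ := min (δ / 2) (|G| / (2 * C + 2)) with hε₀
  have hε₀p : 0 < ε₀ := lt_min (by linarith) (by positivity)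
  have hε₀δ : ε₀ < δ := lt_of_le_of_lt (min_le_left _ _) (by linarith)
  have h1 := key ε₀ hε₀p hε₀δ
  have h2 : ε₀ ≤ |G| / (2 * C + 2) := min_le_right _ _
  have h3 : C * ε₀ ≤ C * (|G| / (2 * C + 2)) := mul_le_mul_of_nonneg_left h2 hC
  have h4 : C * (|G| / (2 * C + 2)) < |G| := by
    have hd : (0:ℝ) < 2 * C + 2 := by linarith
    have : C * (|G| / (2 * C + 2)) = (C * |G|) / (2 * C + 2) := by ring
    rw [this, div_lt_iff₀ hd]
    nlinarith
  linarith

lemma range_to_range (n k : ℕ) (hnk : n ≤ k) (f : ℕ → ℝ) :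
    ∑ j ∈ Finset.range n, f j = ∑ j ∈ Finset.range k, if j < n then f j else 0 := by
  rw [Finset.sum_ite, Finset.sum_const_zero, add_zero]
  apply Finset.sum_congr _ fun _ _ => rfl
  ext j
  simp only [Finset.mem_filter, Finset.mem_range]
  omega

lemma icc_to_range (c k : ℕ) (hk : 1 ≤ k) (f : ℕ → ℝ) :
    ∑ j ∈ Finset.Icc c (k - 1), f j = ∑ j ∈ Finset.range k, if c ≤ j then f j else 0 := by
  rw [Finset.sum_ite, Finset.sum_const_zero, add_zero]
  apply Finset.sum_congr _ fun _ _ => rfl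
  ext j
  simp only [Finset.mem_filter, Finset.mem_range, Finset.mem_Icc]
  omega

lemma I1 (F : ℕ → ℝ) (k i : ℕ) (hik : i < k) :
    ∑ t ∈ Finset.range k, (if t + 1 = i + 1 then (1:ℝ) else 0) * F t = F i := by
  have h : ∀ t, (if t + 1 = i + 1 then (1:ℝ) else 0) * F t
      = if t = i then F t else 0 := by
    intro t
    by_cases h' : t = i
    · simp [h']
    · rw [if_neg h', if_neg (by omega), zero_mul]
  rw [Finset.sum_congr rfl fun t _ => h t, Finset.sum_ite_eq' (Finset.range k) i F,
    if_pos (Finset.mem_range.mpr hik)]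

lemma I2 (a α : ℝ) (F : ℕ → ℝ) (k i : ℕ) (hik : i + 1 < k) :
    ∑ t ∈ Finset.range k, ldiffS a α (fun j => if j = i + 1 then (1:ℝ) else 0) t * F t
      = rdiffS a α F i (k - 1) := by
  by_cases hμ : (1:ℝ) - α = 0
  · simp only [ldiffS, lsumS, rdiffS, rsumS, if_pos hμ]
    have h : ∀ t, ((if t + 1 = i + 1 then (1:ℝ) else 0) - (if t = i + 1 then 1 else 0)) * F t
        = (if t = i then F t else 0) - (if t = i + 1 then F t else 0) := by
      intro t
      by_cases h1 : t = i <;> by_cases h2 : t = i + 1 <;>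
        simp [h1, h2]
    rw [Finset.sum_congr rfl fun t _ => h t, Finset.sum_sub_distrib,
      Finset.sum_ite_eq' (Finset.range k) i F, Finset.sum_ite_eq' (Finset.range k) (i + 1) F,
      if_pos (Finset.mem_range.mpr (by omega)), if_pos (Finset.mem_range.mpr hik)]
    ring
  · simp only [ldiffS, lsumS, rdiffS, rsumS, if_neg hμ, mul_ite, mul_one, mul_zero,
      Finset.sum_ite_eq' ]
    rw [icc_to_range (i + 1) k (by omega), icc_to_range i k (by omega)]
    rw [neg_sub, Finset.mul_sum, Finset.mul_sum, ← Finset.sum_sub_distrib]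
    apply Finset.sum_congr rfl
    intro t ht
    simp only [Finset.mem_range] at ht ⊢
    have e1 : a + (↑(t + 1):ℝ) + (1 - α) - (a + ↑(i + 1) + 1)
        = a + ↑t + (1 - α) - (a + ↑i + 1) := by push_cast; ring
    rw [e1]
    split_ifs <;> first | (exfalso; omega) | ring1

lemma I3 (a β : ℝ) (F : ℕ → ℝ) (k i : ℕ) (hik : i + 1 < k) :
    ∑ t ∈ Finset.range k, rdiffS a β (fun j => if j = i + 1 then (1:ℝ) else 0) t k * F t
      = ldiffS a β F i := by
  by_cases hν : (1:ℝ) - β = 0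
  · simp only [ldiffS, lsumS, rdiffS, rsumS, if_pos hν]
    have h : ∀ t, (-((if t + 1 = i + 1 then (1:ℝ) else 0) - (if t = i + 1 then 1 else 0))) * F t
        = (if t = i + 1 then F t else 0) - (if t = i then F t else 0) := by
      intro t
      by_cases h1 : t = i <;> by_cases h2 : t = i + 1 <;>
        simp [h1, h2]
    rw [Finset.sum_congr rfl fun t _ => h t, Finset.sum_sub_distrib,
      Finset.sum_ite_eq' (Finset.range k) (i + 1) F, Finset.sum_ite_eq' (Finset.range k) i F,
      if_pos (Finset.mem_range.mpr hik), if_pos (Finset.mem_range.mpr (by omega : i < k))]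
  · simp only [ldiffS, lsumS, rdiffS, rsumS, if_neg hν, mul_ite, mul_one, mul_zero,
      Finset.sum_ite_eq']
    rw [range_to_range (i + 1 + 1) k (by omega), range_to_range (i + 1) k (by omega)]
    rw [Finset.mul_sum, Finset.mul_sum, ← Finset.sum_sub_distrib]
    apply Finset.sum_congr rfl
    intro t ht
    simp only [Finset.mem_range, Finset.mem_Icc] at ht ⊢
    have e2 : a + (↑(i + 1):ℝ) + (1 - β) - (a + ↑(t + 1) + 1)
        = a + ↑i + (1 - β) - (a + ↑t + 1) := by push_cast; ring
    rw [e2]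
    split_ifs <;> first | (exfalso; omega) | ring1

/-- STATEMENT 4 (fractional discrete-time Euler–Lagrange equation) on
`𝕋 = {a, …, a+k}`, `k ≥ 2`; trajectories `y : 𝕋 → ℝ` are represented as
sequences `y : ℕ → ℝ` with `y j = y(a + j)`. -/
theorem stmt4 (a : ℝ) (k : ℕ) (hk : 2 ≤ k) (α β : ℝ)
    (hα0 : 0 < α) (hα1 : α ≤ 1) (hβ0 : 0 < β) (hβ1 : β ≤ 1)
    (A B : ℝ) (L Lu Lv Lw Luu Luv Luw Lvv Lvw Lww : ℝ → ℝ → ℝ → ℝ → ℝ)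
    (hLu : ∀ t u v w, HasDerivAt (fun x => L t x v w) (Lu t u v w) u)
    (hLv : ∀ t u v w, HasDerivAt (fun x => L t u x w) (Lv t u v w) v)
    (hLw : ∀ t u v w, HasDerivAt (fun x => L t u v x) (Lw t u v w) w)
    (hLuu : ∀ t u v w, HasDerivAt (fun x => Lu t x v w) (Luu t u v w) u)
    (hLuv : ∀ t u v w, HasDerivAt (fun x => Lu t u x w) (Luv t u v w) v)
    (hLuw : ∀ t u v w, HasDerivAt (fun x => Lu t u v x) (Luw t u v w) w)
    (hLvv : ∀ t u v w, HasDerivAt (fun x => Lv t u x w) (Lvv t u v w) v)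
    (hLvw : ∀ t u v w, HasDerivAt (fun x => Lv t u v x) (Lvw t u v w) w)
    (hLww : ∀ t u v w, HasDerivAt (fun x => Lw t u v x) (Lww t u v w) w)
    (hCuu : ∀ t, Continuous fun p : ℝ × ℝ × ℝ => Luu t p.1 p.2.1 p.2.2)
    (hCuv : ∀ t, Continuous fun p : ℝ × ℝ × ℝ => Luv t p.1 p.2.1 p.2.2)
    (hCuw : ∀ t, Continuous fun p : ℝ × ℝ × ℝ => Luw t p.1 p.2.1 p.2.2)
    (hCvv : ∀ t, Continuous fun p : ℝ × ℝ × ℝ => Lvv t p.1 p.2.1 p.2.2)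
    (hCvw : ∀ t, Continuous fun p : ℝ × ℝ × ℝ => Lvw t p.1 p.2.1 p.2.2)
    (hCww : ∀ t, Continuous fun p : ℝ × ℝ × ℝ => Lww t p.1 p.2.1 p.2.2)
    (ytil : ℕ → ℝ) (hyA : ytil 0 = A) (hyB : ytil k = B)
    (hmin : ∃ δ > 0, ∀ y : ℕ → ℝ, y 0 = A → y k = B →
      discNorm a k α β (fun j => y j - ytil j) < δ →
      (∑ i ∈ Finset.range k, L (a + i) (ytil (i + 1)) (ldiffS a α ytil i) (rdiffS a β ytil i k))
        ≤ ∑ i ∈ Finset.range k, L (a + i) (y (i + 1)) (ldiffS a α y i) (rdiffS a β y i k))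
    (i : ℕ) (hi : i < k - 1) :
    Lu (a + i) (ytil (i + 1)) (ldiffS a α ytil i) (rdiffS a β ytil i k)
      + rdiffS a α
          (fun j => Lv (a + j) (ytil (j + 1)) (ldiffS a α ytil j) (rdiffS a β ytil j k)) i (k - 1)
      + ldiffS a β
          (fun j => Lw (a + j) (ytil (j + 1)) (ldiffS a α ytil j) (rdiffS a β ytil j k)) i
      = 0 := by
  obtain ⟨δ, hδ, hmin'⟩ := hmin
  have hik : i + 1 < k := by omega
  have hk0 : 0 < k := by omega
  obtain ⟨e, he⟩ : ∃ e : ℕ → ℝ, e = fun j => if j = i + 1 then (1:ℝ) else 0 := ⟨_, rfl⟩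
  have hT : ∀ t : ℕ, ∃ C, 0 ≤ C ∧ ∀ ε : ℝ, |ε| ≤ 1 →
      |L (a + t) (ytil (t + 1) + ε * e (t + 1))
          (ldiffS a α ytil t + ε * ldiffS a α e t)
          (rdiffS a β ytil t k + ε * rdiffS a β e t k)
        - L (a + t) (ytil (t + 1)) (ldiffS a α ytil t) (rdiffS a β ytil t k)
        - ε * (e (t + 1) * Lu (a + t) (ytil (t + 1)) (ldiffS a α ytil t) (rdiffS a β ytil t k)
          + ldiffS a α e t * Lv (a + t) (ytil (t + 1)) (ldiffS a α ytil t) (rdiffS a β ytil t k)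
          + rdiffS a β e t k
            * Lw (a + t) (ytil (t + 1)) (ldiffS a α ytil t) (rdiffS a β ytil t k))|
        ≤ C * ε ^ 2 := fun t =>
    taylor2 (L (a + t)) (Lu (a + t)) (Lv (a + t)) (Lw (a + t)) (Luu (a + t)) (Luv (a + t))
      (Luw (a + t)) (Lvv (a + t)) (Lvw (a + t)) (Lww (a + t))
      (hLu (a + t)) (hLv (a + t)) (hLw (a + t)) (hLuu (a + t)) (hLuv (a + t)) (hLuw (a + t))
      (hLvv (a + t)) (hLvw (a + t)) (hLww (a + t))
      (hCuu (a + t)) (hCuv (a + t)) (hCuw (a + t)) (hCvv (a + t)) (hCvw (a + t)) (hCww (a + t))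
      (ytil (t + 1)) (ldiffS a α ytil t) (rdiffS a β ytil t k)
      (e (t + 1)) (ldiffS a α e t) (rdiffS a β e t k)
  choose Cf hC0 hCb using hT
  obtain ⟨N, hN⟩ : ∃ N : ℝ, N = discNorm a k α β e := ⟨_, rfl⟩
  have hN0 : 0 ≤ N := hN ▸ discNorm_nonneg a hk0 α β e
  obtain ⟨δ', hδ'⟩ : ∃ x : ℝ, x = min (δ / (N + 1)) 1 := ⟨_, rfl⟩
  have hδ'0 : 0 < δ' := by rw [hδ']; exact lt_min (by positivity) one_pos
  obtain ⟨C, hC⟩ : ∃ x : ℝ, x = ∑ t ∈ Finset.range k, Cf t := ⟨_, rfl⟩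
  have hCnn : 0 ≤ C := by
    rw [hC]; exact Finset.sum_nonneg fun t _ => hC0 t
  obtain ⟨G, hG⟩ : ∃ x : ℝ, x = ∑ t ∈ Finset.range k,
      (e (t + 1) * Lu (a + t) (ytil (t + 1)) (ldiffS a α ytil t) (rdiffS a β ytil t k)
        + ldiffS a α e t * Lv (a + t) (ytil (t + 1)) (ldiffS a α ytil t) (rdiffS a β ytil t k)
        + rdiffS a β e t k
          * Lw (a + t) (ytil (t + 1)) (ldiffS a α ytil t) (rdiffS a β ytil t k)) := ⟨_, rfl⟩
  have hquad : ∀ ε : ℝ, |ε| < δ' → 0 ≤ ε * G + C * ε ^ 2 := by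
    intro ε hε
    have hε1 : |ε| ≤ 1 := le_of_lt (lt_of_lt_of_le hε (hδ' ▸ min_le_right _ _))
    obtain ⟨y, hy⟩ : ∃ y : ℕ → ℝ, y = fun j => ytil j + ε * e j := ⟨_, rfl⟩
    have hy0 : y 0 = A := by
      rw [hy]; simp only [he]
      rw [if_neg (by omega : ¬(0 : ℕ) = i + 1)]
      simpa using hyA
    have hyk : y k = B := by
      rw [hy]; simp only [he]
      rw [if_neg (by omega : ¬k = i + 1)]
      simpa using hyB
    have hnorm : discNorm a k α β (fun j => y j - ytil j) < δ := by
      have heq : (fun j => y j - ytil j) = fun j => ε * e j := by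
        funext j; rw [hy]; ring
      rw [heq]
      calc discNorm a k α β (fun j => ε * e j) ≤ |ε| * discNorm a k α β e :=
            discNorm_smul_le a hk0 α β ε e
        _ = |ε| * N := by rw [hN]
        _ ≤ |ε| * (N + 1) := by nlinarith [abs_nonneg ε]
        _ < δ' * (N + 1) := by
            apply mul_lt_mul_of_pos_right hε; linarith
        _ ≤ (δ / (N + 1)) * (N + 1) := by
            apply mul_le_mul_of_nonneg_right _ (by linarith)
            rw [hδ']; exact min_le_left _ _
        _ = δ := by field_simp
    have hle := hmin' y hy0 hyk hnorm
    have hle2 : (∑ t ∈ Finset.range k,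
          L (a + t) (ytil (t + 1)) (ldiffS a α ytil t) (rdiffS a β ytil t k))
        ≤ ∑ t ∈ Finset.range k,
          L (a + t) (ytil (t + 1) + ε * e (t + 1))
            (ldiffS a α ytil t + ε * ldiffS a α e t)
            (rdiffS a β ytil t k + ε * rdiffS a β e t k) := by
      refine hle.trans_eq (Finset.sum_congr rfl fun t _ => ?_)
      rw [hy]
      rw [ldiffS_lin, rdiffS_lin]
    have habs : |(∑ t ∈ Finset.range k,
          L (a + t) (ytil (t + 1) + ε * e (t + 1))
            (ldiffS a α ytil t + ε * ldiffS a α e t)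
            (rdiffS a β ytil t k + ε * rdiffS a β e t k))
        - (∑ t ∈ Finset.range k,
          L (a + t) (ytil (t + 1)) (ldiffS a α ytil t) (rdiffS a β ytil t k))
        - ε * G| ≤ C * ε ^ 2 := by
      rw [hG, hC, Finset.mul_sum, ← Finset.sum_sub_distrib, ← Finset.sum_sub_distrib,
        Finset.sum_mul]
      refine le_trans (Finset.abs_sum_le_sum_abs _ _) (Finset.sum_le_sum fun t _ => ?_)
      exact hCb t ε hε1
    rw [abs_le] at habs
    linarith [habs.1, habs.2, hle2]
  have hGzero : G = 0 := Gzero G C δ' hδ'0 hCnn hquad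
  have hsplit : G = (∑ t ∈ Finset.range k,
        e (t + 1) * Lu (a + t) (ytil (t + 1)) (ldiffS a α ytil t) (rdiffS a β ytil t k))
      + (∑ t ∈ Finset.range k,
        ldiffS a α e t * Lv (a + t) (ytil (t + 1)) (ldiffS a α ytil t) (rdiffS a β ytil t k))
      + ∑ t ∈ Finset.range k,
        rdiffS a β e t k * Lw (a + t) (ytil (t + 1)) (ldiffS a α ytil t)
          (rdiffS a β ytil t k) := by
    rw [hG, ← Finset.sum_add_distrib, ← Finset.sum_add_distrib]
  have e1 : (∑ t ∈ Finset.range k,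
        e (t + 1) * Lu (a + t) (ytil (t + 1)) (ldiffS a α ytil t) (rdiffS a β ytil t k))
      = Lu (a + i) (ytil (i + 1)) (ldiffS a α ytil i) (rdiffS a β ytil i k) := by
    simp only [he]
    exact I1 (fun t => Lu (a + t) (ytil (t + 1)) (ldiffS a α ytil t) (rdiffS a β ytil t k))
      k i (by omega)
  have e2 : (∑ t ∈ Finset.range k,
        ldiffS a α e t * Lv (a + t) (ytil (t + 1)) (ldiffS a α ytil t) (rdiffS a β ytil t k))
      = rdiffS a α
          (fun j => Lv (a + j) (ytil (j + 1)) (ldiffS a α ytil j) (rdiffS a β ytil j k))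
          i (k - 1) := by
    simp only [he]
    exact I2 a α
      (fun t => Lv (a + t) (ytil (t + 1)) (ldiffS a α ytil t) (rdiffS a β ytil t k)) k i hik
  have e3 : (∑ t ∈ Finset.range k,
        rdiffS a β e t k * Lw (a + t) (ytil (t + 1)) (ldiffS a α ytil t) (rdiffS a β ytil t k))
      = ldiffS a β
          (fun j => Lw (a + j) (ytil (j + 1)) (ldiffS a α ytil j) (rdiffS a β ytil j k)) i := by
    simp only [he]
    exact I3 a β
      (fun t => Lw (a + t) (ytil (t + 1)) (ldiffS a α ytil t) (rdiffS a β ytil t k)) k i hik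
  rw [← e1, ← e2, ← e3, ← hsplit]
  exact hGzero
end

section
/- Let a ∈ ℝ, h > 0, b = a + kh with k ∈ ℕ, 𝕋 = {a, a+h, …, b}, 𝕋^κ = 𝕋∖{b}, σ(t) = t+h, f^Δ(t) = (f(t+h) − f(t))/h. Let f : 𝕋 → ℝ and ν ≥ 0. Then for all t ∈ 𝕋^κ: ( _aΔ_h^{−ν} f^Δ )(t+νh) = ( t ↦ ( _aΔ_h^{−ν} f )(t+νh) )^Δ(t) − (ν/Γ(ν+1)) (t+νh−a)_h^{(ν−1)} f(a), where the left fractional h-sum of order ν > 0 is ( _aΔ_h^{−ν} g )(t+νh) = (1/Γ(ν)) Σ_{j=a/h}^{t/h} (t+νh−σ(jh))_h^{(ν−1)} g(jh)·h for t ∈ 𝕋, ( _aΔ_h^{0} g )(t) = g(t), and x_h^{(y)} := h^y Γ(x/h+1)/Γ(x/h+1−y). -/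
/-- The `h`-factorial function `x_h^{(y)} = h^y Γ(x/h+1)/Γ(x/h+1−y)`. -/
noncomputable def hfac (h x y : ℝ) : ℝ :=
  h ^ y * (Real.Gamma (x / h + 1) / Real.Gamma (x / h + 1 - y))

/-- The left fractional `h`-sum `( _aΔ_h^{−ν} g )(t + νh)` at `t = a + i·h`:
`(1/Γ(ν)) Σ_{j=a/h}^{t/h} (t+νh−σ(jh))_h^{(ν−1)} g(jh)·h`; for `ν = 0` it is `g(t)`. -/
noncomputable def hlsum (a h ν : ℝ) (g : ℝ → ℝ) (i : ℕ) : ℝ :=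
  if ν = 0 then g (a + i * h)
  else (1 / Real.Gamma ν) *
    ∑ j ∈ Finset.range (i + 1),
      hfac h ((a + i * h) + ν * h - (a + j * h + h)) (ν - 1) * g (a + j * h) * h

/-- for `f : 𝕋 → ℝ` with `𝕋 = {a, a+h, …, a+k·h}`, `ν ≥ 0`, and
all `t = a + i·h ∈ 𝕋^κ` (i.e. `i < k`):
`( _aΔ_h^{−ν} f^Δ )(t+νh) = ( t ↦ ( _aΔ_h^{−ν} f )(t+νh) )^Δ(t)
   − (ν/Γ(ν+1)) (t+νh−a)_h^{(ν−1)} f(a)`,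
where `f^Δ(s) = (f(s+h) − f(s))/h`. -/
theorem stmt10 (a h : ℝ) (hh : 0 < h) (k : ℕ) (hk : 0 < k) (ν : ℝ) (hν : 0 ≤ ν)
    (f : ℝ → ℝ) (i : ℕ) (hi : i < k) :
    hlsum a h ν (fun s => (f (s + h) - f s) / h) i
      = (hlsum a h ν f (i + 1) - hlsum a h ν f i) / h
        - ν / Real.Gamma (ν + 1) * hfac h ((a + i * h) + ν * h - a) (ν - 1) * f a := by
  have hne : h ≠ 0 := hh.ne'
  by_cases h0 : ν = 0
  · subst h0
    simp [hlsum]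
    ring_nf
  · have hνpos : 0 < ν := lt_of_le_of_ne hν (Ne.symm h0)
    have hG : Real.Gamma ν ≠ 0 := (Real.Gamma_pos_of_pos hνpos).ne'
    have hG1 : ν / Real.Gamma (ν + 1) = 1 / Real.Gamma ν := by
      rw [Real.Gamma_add_one h0]
      field_simp
    rw [hG1]
    simp only [hlsum, if_neg h0]
    push_cast
    have key : ∑ j ∈ Finset.range (i + 1 + 1),
        hfac h ((a + (↑i + 1) * h) + ν * h - (a + ↑j * h + h)) (ν - 1) * f (a + ↑j * h) * h
      = hfac h ((a + ↑i * h) + ν * h - a) (ν - 1) * f a * h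
        + ∑ j ∈ Finset.range (i + 1),
            hfac h ((a + ↑i * h) + ν * h - (a + ↑j * h + h)) (ν - 1) * f (a + ↑j * h + h) * h := by
      rw [Finset.sum_range_succ']
      rw [add_comm]
      congr 1
      · push_cast
        rw [show a + (↑i + 1) * h + ν * h - (a + 0 * h + h)
              = a + ↑i * h + ν * h - a by ring,
           show a + (0 : ℝ) * h = a by ring]
      · apply Finset.sum_congr rfl
        intro j _
        push_cast
        rw [show a + (↑i + 1) * h + ν * h - (a + (↑j + 1) * h + h)
              = a + ↑i * h + ν * h - (a + ↑j * h + h) by ring,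
           show a + (↑j + 1) * h = a + ↑j * h + h by ring]
    rw [key]
    have step : ∑ x ∈ Finset.range (i + 1),
        hfac h (a + ↑i * h + ν * h - (a + ↑x * h + h)) (ν - 1) *
          ((f (a + ↑x * h + h) - f (a + ↑x * h)) / h) * h
      = ((∑ x ∈ Finset.range (i + 1),
          hfac h (a + ↑i * h + ν * h - (a + ↑x * h + h)) (ν - 1) * f (a + ↑x * h + h) * h)
        - ∑ x ∈ Finset.range (i + 1),
          hfac h (a + ↑i * h + ν * h - (a + ↑x * h + h)) (ν - 1) * f (a + ↑x * h) * h) / h := by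
      rw [← Finset.sum_sub_distrib, Finset.sum_div]
      apply Finset.sum_congr rfl
      intro x _
      field_simp
    rw [step]
    generalize (∑ x ∈ Finset.range (i + 1),
        hfac h (a + ↑i * h + ν * h - (a + ↑x * h + h)) (ν - 1) * f (a + ↑x * h + h) * h) = S1
    generalize (∑ x ∈ Finset.range (i + 1),
        hfac h (a + ↑i * h + ν * h - (a + ↑x * h + h)) (ν - 1) * f (a + ↑x * h) * h) = S0
    generalize hfac h (a + ↑i * h + ν * h - a) (ν - 1) = D
    field_simp
    ring
end

section
/- Let a ∈ ℝ, h > 0, b = a + kh with k ∈ ℕ, 𝕋 = {a, a+h, …, b}, 𝕋^κ = 𝕋∖{b}, σ(t) = t+h, ρ(t) = t−h, f^Δ(t) = (f(t+h) − f(t))/h. Let f : 𝕋 → ℝ and ν ≥ 0. Then for all t ∈ 𝕋^κ: ( _hΔ_{ρ(b)}^{−ν} f^Δ )(t−νh) = (ν/Γ(ν+1)) (b+νh−σ(t))_h^{(ν−1)} f(b) + ( t ↦ ( _hΔ_b^{−ν} f )(t−νh) )^Δ(t), where the right fractional h-sum of order ν > 0 with right endpoint c ∈ 𝕋 is ( _hΔ_c^{−ν}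 g )(t−νh) = (1/Γ(ν)) Σ_{j=t/h}^{c/h} (jh+νh−σ(t))_h^{(ν−1)} g(jh)·h, ( _hΔ_c^{0} g )(t) = g(t), and x_h^{(y)} := h^y Γ(x/h+1)/Γ(x/h+1−y). -/
/-- The right fractional `h`-sum `( _hΔ_c^{−ν} g )(t − νh)` at `t = a + i·h`
with right endpoint `c = a + m·h`:
`(1/Γ(ν)) Σ_{j=t/h}^{c/h} (jh+νh−σ(t))_h^{(ν−1)} g(jh)·h`; for `ν = 0` it is `g(t)`. -/
noncomputable def hrsum (a h ν : ℝ) (g : ℝ → ℝ) (i m : ℕ) : ℝ :=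
  if ν = 0 then g (a + i * h)
  else (1 / Real.Gamma ν) *
    ∑ j ∈ Finset.Icc i m,
      hfac h ((a + j * h) + ν * h - (a + i * h + h)) (ν - 1) * g (a + j * h) * h

/-- for `f : 𝕋 → ℝ` with `𝕋 = {a, a+h, …, b}`, `b = a + k·h`,
`ν ≥ 0`, and all `t = a + i·h ∈ 𝕋^κ` (i.e. `i < k`):
`( _hΔ_{ρ(b)}^{−ν} f^Δ )(t−νh)
   = (ν/Γ(ν+1)) (b+νh−σ(t))_h^{(ν−1)} f(b) + ( t ↦ ( _hΔ_b^{−ν} f )(t−νh) )^Δ(t)`,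
where `f^Δ(s) = (f(s+h) − f(s))/h`, `σ(t) = t+h`, `ρ(b) = b−h`. -/
theorem stmt11 (a h : ℝ) (hh : 0 < h) (k : ℕ) (hk : 0 < k) (ν : ℝ) (hν : 0 ≤ ν)
    (f : ℝ → ℝ) (i : ℕ) (hi : i < k) :
    hrsum a h ν (fun s => (f (s + h) - f s) / h) i (k - 1)
      = ν / Real.Gamma (ν + 1) *
            hfac h ((a + k * h) + ν * h - (a + i * h + h)) (ν - 1) * f (a + k * h)
        + (hrsum a h ν f (i + 1) k - hrsum a h ν f i k) / h := by
  rcases eq_or_lt_of_le hν with hν0 | hν0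
  · simp only [hrsum, if_pos hν0.symm, ← hν0]
    push_cast
    ring_nf
  · have hν0' : ν ≠ 0 := ne_of_gt hν0
    simp only [hrsum, if_neg hν0']
    have hΓ : Real.Gamma (ν + 1) = ν * Real.Gamma ν := Real.Gamma_add_one hν0'
    have hΓν : Real.Gamma ν ≠ 0 := (Real.Gamma_pos_of_pos hν0).ne'
    have hk1 : k - 1 + 1 = k := Nat.succ_pred_eq_of_pos hk
    have hre : Finset.Icc (i+1) k = (Finset.Icc i (k-1)).map (addRightEmbedding 1) := by
      rw [Finset.map_add_right_Icc, hk1]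
    rw [hre, Finset.sum_map]
    simp only [addRightEmbedding_apply]
    have hsplit : ∑ j ∈ Finset.Icc i k,
        hfac h ((a + j * h) + ν * h - (a + i * h + h)) (ν - 1) * f (a + j * h) * h
        = (∑ j ∈ Finset.Icc i (k-1),
            hfac h ((a + j * h) + ν * h - (a + i * h + h)) (ν - 1) * f (a + j * h) * h)
          + hfac h ((a + k * h) + ν * h - (a + i * h + h)) (ν - 1) * f (a + k * h) * h := by
      conv_lhs => rw [← hk1]
      rw [Finset.sum_Icc_succ_top (by omega)]
      rw [hk1]
    rw [hsplit]
    have hre2 : (∑ j ∈ Finset.Icc i (k-1),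
          hfac h ((a + (↑(j+1) : ℝ) * h) + ν * h - (a + (↑(i+1) : ℝ) * h + h)) (ν - 1)
            * f (a + (↑(j+1) : ℝ) * h) * h)
        = ∑ j ∈ Finset.Icc i (k-1),
          hfac h ((a + j * h) + ν * h - (a + i * h + h)) (ν - 1) * f (a + j * h + h) * h :=
      Finset.sum_congr rfl (fun j _ => by
        have h1 : a + (↑(j+1) : ℝ) * h + ν * h - (a + (↑(i+1) : ℝ) * h + h)
            = a + j * h + ν * h - (a + i * h + h) := by push_cast; ring
        have h2 : a + (↑(j+1) : ℝ) * h = a + (j : ℝ) * h + h := by push_cast; ring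
        rw [h1, h2])
    rw [hre2]
    have hA : ∀ j ∈ Finset.Icc i (k-1),
        hfac h ((a + j * h) + ν * h - (a + i * h + h)) (ν - 1)
          * ((f (a + j * h + h) - f (a + j * h)) / h) * h
        = (hfac h ((a + j * h) + ν * h - (a + i * h + h)) (ν - 1) * f (a + j * h + h) * h
          - hfac h ((a + j * h) + ν * h - (a + i * h + h)) (ν - 1) * f (a + j * h) * h) / h := by
      intro j _
      field_simp
    rw [Finset.sum_congr rfl hA, ← Finset.sum_div, Finset.sum_sub_distrib, hΓ]
    set S1 := ∑ j ∈ Finset.Icc i (k-1),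
      hfac h ((a + j * h) + ν * h - (a + i * h + h)) (ν - 1) * f (a + j * h + h) * h
    set S2 := ∑ j ∈ Finset.Icc i (k-1),
      hfac h ((a + j * h) + ν * h - (a + i * h + h)) (ν - 1) * f (a + j * h) * h
    field_simp
    ring
end

section
/- Let a ∈ ℝ, h > 0, b = a + kh with k ∈ ℕ, 𝕋 = {a, a+h, …, b}, 𝕋^κ = 𝕋∖{b}, 𝕋^{κ²} = 𝕋∖{b−h, b}, σ(t) = t+h, ρ(t) = t−h, and for c ≤ d in 𝕋 let ∫_c^d φ(t)Δt = Σ_{j=c/h}^{d/h−1} φ(jh)·h. If f and k are real functions defined on 𝕋^κ and 𝕋^{κ²} respectively, and g is a real function on 𝕋^κ × 𝕋^{κ²}, then ∫_a^b f(t) [ ∫_a^t g(t,s) k(s) Δs ] Δt = ∫_a^{ρ(b)} k(t) [ ∫_{σ(t)}^{b} g(s,t) f(s) Δs ] Δt. -/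
/-- interchange of delta integrals on
`𝕋 = {a, a+h, …, a+N·h}` (points `a + i·h`):
`∫_a^b f(t)[∫_a^t g(t,s) k(s) Δs]Δt = ∫_a^{ρ(b)} k(t)[∫_{σ(t)}^{b} g(s,t) f(s) Δs]Δt`,
where `∫_c^d φ Δt = Σ_{j=c/h}^{d/h−1} φ(jh)·h`, `σ(t) = t+h`, `ρ(t) = t−h`. -/
theorem stmt12 (a h : ℝ) (hh : 0 < h) (N : ℕ) (hN : 0 < N)
    (f k : ℝ → ℝ) (g : ℝ → ℝ → ℝ) :
    ∑ i ∈ Finset.range N,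
        f (a + i * h) * (∑ j ∈ Finset.range i, g (a + i * h) (a + j * h) * k (a + j * h) * h) * h
      = ∑ i ∈ Finset.range (N - 1),
          k (a + i * h) *
            (∑ j ∈ Finset.Ico (i + 1) N, g (a + j * h) (a + i * h) * f (a + j * h) * h) * h := by
  have key : ∀ i j : ℕ,
      f (a + j * h) * (g (a + j * h) (a + i * h) * k (a + i * h) * h) * h
        = k (a + i * h) * (g (a + j * h) (a + i * h) * f (a + j * h) * h) * h := by
    intro i j; ring
  calc ∑ i ∈ Finset.range N,
        f (a + i * h) * (∑ j ∈ Finset.range i, g (a + i * h) (a + j * h) * k (a + j * h) * h) * h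
      = ∑ i ∈ Finset.Ico 0 N, ∑ j ∈ Finset.Ico 0 i,
          f (a + i * h) * (g (a + i * h) (a + j * h) * k (a + j * h) * h) * h := by
        rw [Finset.range_eq_Ico]
        refine Finset.sum_congr rfl fun i _ => ?_
        rw [Finset.mul_sum, Finset.sum_mul]
        rw [Finset.range_eq_Ico]
    _ = ∑ j ∈ Finset.Ico 0 N, ∑ i ∈ Finset.Ico (j + 1) N,
          f (a + i * h) * (g (a + i * h) (a + j * h) * k (a + j * h) * h) * h := by
        rw [← Finset.sum_Ico_Ico_comm']
    _ = ∑ j ∈ Finset.range (N - 1),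
          k (a + j * h) *
            (∑ i ∈ Finset.Ico (j + 1) N, g (a + i * h) (a + j * h) * f (a + i * h) * h) * h := by
        rw [Finset.range_eq_Ico]
        rw [show Finset.Ico 0 N = Finset.Ico 0 (N - 1) ∪ Finset.Ico (N-1) N by
          rw [Finset.Ico_union_Ico_eq_Ico] <;> omega]
        rw [Finset.sum_union (by
          apply Finset.Ico_disjoint_Ico_consecutive)]
        have : ∑ j ∈ Finset.Ico (N-1) N, ∑ i ∈ Finset.Ico (j + 1) N,
            f (a + i * h) * (g (a + i * h) (a + j * h) * k (a + j * h) * h) * h = 0 := by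
          apply Finset.sum_eq_zero
          intro j hj
          simp only [Finset.mem_Ico] at hj
          rw [Finset.Ico_eq_empty (by omega), Finset.sum_empty]
        rw [this, add_zero]
        apply Finset.sum_congr rfl
        intro j _
        rw [Finset.mul_sum, Finset.sum_mul]
        exact Finset.sum_congr rfl fun i _ => key j i
end

section
/- Let a ∈ ℝ, h > 0, b = a + kh with k ∈ ℕ, 𝕋 = {a, a+h, …, b}, 𝕋^κ = 𝕋∖{b}, σ(t) = t+h, ρ(t) = t−h, ∫_c^d φ(t)Δt = Σ_{j=c/h}^{d/h−1} φ(jh)·h. Fix 0 < α ≤ 1 and put γ = 1−α. Then for real-valued functions f on 𝕋^κ and g on 𝕋: ∫_a^b f(t) ( _aΔ_h^α g )(t) Δt = h^γ f(ρ(b)) g(b) − h^γ f(a) g(a) + ∫_a^{ρ(b)} ( _hΔ_{ρ(b)}^α f )(t) · g(σ(t)) Δt + (γ/Γ(γ+1)) g(a) [ ∫_a^b (t+γh−a)_h^{(γ−1)} f(t) Δt − ∫_{σ(a)}^b (t+γh−σ(a))_h^{(γ−1)} f(t) Δt ] (fractional h-summation by parts). -/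
/-- The left fractional `h`-difference
`( _aΔ_h^α g )(t) = ( t ↦ ( _aΔ_h^{−(1−α)} g )(t+(1−α)h) )^Δ(t)` at `t = a + i·h`. -/
noncomputable def hldiff (a h α : ℝ) (g : ℝ → ℝ) (i : ℕ) : ℝ :=
  (hlsum a h (1 - α) g (i + 1) - hlsum a h (1 - α) g i) / h

/-- The right fractional `h`-difference
`( _hΔ_c^α g )(t) = −( t ↦ ( _hΔ_c^{−(1−α)} g )(t−(1−α)h) )^Δ(t)` at `t = a + i·h`
with right endpoint `c = a + m·h`. -/
noncomputable def hrdiff (a h α : ℝ) (g : ℝ → ℝ) (i m : ℕ) : ℝ :=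
  -((hrsum a h (1 - α) g (i + 1) m - hrsum a h (1 - α) g i m) / h)

lemma abel_summation_aux (F G : ℕ → ℝ) (m : ℕ) :
    ∑ i ∈ Finset.range (m+1), F i * (G (i+1) - G i)
      = F m * G (m+1) - F 0 * G 0 - ∑ i ∈ Finset.range m, (F (i+1) - F i) * G (i+1) := by
  induction m with
  | zero => simp; ring
  | succ m ih => rw [Finset.sum_range_succ, ih, Finset.sum_range_succ]; ring

lemma swap_aux (Φ : ℕ → ℕ → ℝ) (m : ℕ) :
    ∑ i ∈ Finset.range (m+1), ∑ j ∈ Finset.range i, Φ i j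
      = ∑ p ∈ Finset.range m, ∑ q ∈ Finset.Icc (p+1) m, Φ q p := by
  induction m with
  | zero => simp
  | succ m ih =>
      rw [Finset.sum_range_succ, ih]
      have h1 : ∀ p ∈ Finset.range (m+1), ∑ q ∈ Finset.Icc (p+1) (m+1), Φ q p
          = (∑ q ∈ Finset.Icc (p+1) m, Φ q p) + Φ (m+1) p := by
        intro p hp
        exact Finset.sum_Icc_succ_top (by simp at hp; omega) _
      rw [Finset.sum_congr rfl h1, Finset.sum_add_distrib, Finset.sum_range_succ
        (fun p => ∑ q ∈ Finset.Icc (p+1) m, Φ q p), Finset.sum_range_succ (fun p => Φ (m+1) p)]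
      have h2 : ∑ q ∈ Finset.Icc (m+1) m, Φ q m = 0 := by
        rw [Finset.Icc_eq_empty (by omega)]; simp
      rw [h2]; ring

lemma key_s13 (h c : ℝ) (W F G : ℕ → ℝ) (m : ℕ) :
    (∑ i ∈ Finset.range (m+1),
        F i * (c * ∑ j ∈ Finset.range (i+1+1), W (i+1-j) * G j * h
               - c * ∑ j ∈ Finset.range (i+1), W (i-j) * G j * h))
      = c * W 0 * h * F m * G (m+1) - c * W 0 * h * F 0 * G 0
        + (∑ i ∈ Finset.range m,
            (c * ∑ j ∈ Finset.Icc i m, W (j-i) * F j * h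
             - c * ∑ j ∈ Finset.Icc (i+1) m, W (j-(i+1)) * F j * h) * G (i+1))
        + c * G 0 * (∑ i ∈ Finset.range (m+1), W (i+1) * F i * h
            - ∑ i ∈ Finset.Ico 1 (m+1), W i * F i * h) := by
  -- LHS normal form
  have hterm : ∀ i ∈ Finset.range (m+1),
      F i * (c * ∑ j ∈ Finset.range (i+1+1), W (i+1-j) * G j * h
             - c * ∑ j ∈ Finset.range (i+1), W (i-j) * G j * h)
      = c * W 0 * h * (F i * G (i+1))
        + c * h * ∑ j ∈ Finset.range (i+1), (W (i+1-j) - W (i-j)) * (F i * G j) := by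
    intro i _
    rw [Finset.sum_range_succ, Nat.sub_self]
    have e1 : (∑ j ∈ Finset.range (i+1), W (i+1-j) * G j * h)
        - (∑ j ∈ Finset.range (i+1), W (i-j) * G j * h)
        = ∑ j ∈ Finset.range (i+1), (W (i+1-j) - W (i-j)) * G j * h := by
      rw [← Finset.sum_sub_distrib]
      exact Finset.sum_congr rfl fun j _ => by ring
    have e2 : ∑ j ∈ Finset.range (i+1), (W (i+1-j) - W (i-j)) * (F i * G j)
        = F i * ∑ j ∈ Finset.range (i+1), (W (i+1-j) - W (i-j)) * G j := by
      rw [Finset.mul_sum]; exact Finset.sum_congr rfl fun j _ => by ring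
    have e3 : ∑ j ∈ Finset.range (i+1), (W (i+1-j) - W (i-j)) * G j * h
        = (∑ j ∈ Finset.range (i+1), (W (i+1-j) - W (i-j)) * G j) * h := by
      rw [Finset.sum_mul]
    linear_combination F i * c * e1 - c * h * e2 + F i * c * e3
  rw [Finset.sum_congr rfl hterm, Finset.sum_add_distrib, ← Finset.mul_sum, ← Finset.mul_sum]
  -- split off j = 0 in the inner sums
  have hsplit : ∀ i ∈ Finset.range (m+1),
      ∑ j ∈ Finset.range (i+1), (W (i+1-j) - W (i-j)) * (F i * G j)
      = (∑ j ∈ Finset.range i, (W (i-j) - W (i-(j+1))) * (F i * G (j+1)))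
        + (W (i+1) - W i) * (F i * G 0) := by
    intro i _
    rw [Finset.sum_range_succ' (fun j => (W (i+1-j) - W (i-j)) * (F i * G j)) i]
    simp only [Nat.sub_zero, Nat.succ_sub_succ_eq_sub]
  rw [Finset.sum_congr rfl hsplit, Finset.sum_add_distrib]
  -- middle-sum normal form
  have hmid : ∀ i ∈ Finset.range m,
      (c * ∑ j ∈ Finset.Icc i m, W (j-i) * F j * h
       - c * ∑ j ∈ Finset.Icc (i+1) m, W (j-(i+1)) * F j * h) * G (i+1)
      = c * W 0 * h * (F i * G (i+1))
        + c * h * ∑ q ∈ Finset.Icc (i+1) m, (W (q-i) - W (q-(i+1))) * (F q * G (i+1)) := by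
    intro i hi
    simp only [Finset.mem_range] at hi
    have hins : Finset.Icc i m = insert i (Finset.Icc (i+1) m) := by
      ext x; simp; omega
    rw [hins, Finset.sum_insert (by simp), Nat.sub_self]
    have e1 : (∑ j ∈ Finset.Icc (i+1) m, W (j-i) * F j * h)
        - (∑ j ∈ Finset.Icc (i+1) m, W (j-(i+1)) * F j * h)
        = ∑ j ∈ Finset.Icc (i+1) m, (W (j-i) - W (j-(i+1))) * F j * h := by
      rw [← Finset.sum_sub_distrib]
      exact Finset.sum_congr rfl fun j _ => by ring
    have e2 : ∑ q ∈ Finset.Icc (i+1) m, (W (q-i) - W (q-(i+1))) * (F q * G (i+1))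
        = (∑ j ∈ Finset.Icc (i+1) m, (W (j-i) - W (j-(i+1))) * F j) * G (i+1) := by
      rw [Finset.sum_mul]; exact Finset.sum_congr rfl fun j _ => by ring
    have e3 : ∑ j ∈ Finset.Icc (i+1) m, (W (j-i) - W (j-(i+1))) * F j * h
        = (∑ j ∈ Finset.Icc (i+1) m, (W (j-i) - W (j-(i+1))) * F j) * h := by
      rw [Finset.sum_mul]
    linear_combination c * G (i+1) * e1 - c * h * e2 + c * G (i+1) * e3
  rw [Finset.sum_congr rfl hmid, Finset.sum_add_distrib, ← Finset.mul_sum, ← Finset.mul_sum]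
  -- T-term normal form
  have hT : (∑ i ∈ Finset.range (m+1), W (i+1) * F i * h
        - ∑ i ∈ Finset.Ico 1 (m+1), W i * F i * h)
      = h * (∑ i ∈ Finset.range (m+1), (W (i+1) - W i) * F i) + W 0 * F 0 * h := by
    rw [Finset.sum_Ico_eq_sum_range (fun i => W i * F i * h) 1 (m+1)]
    simp only [Nat.add_sub_cancel]
    rw [Finset.sum_range_succ' (fun i => W (i+1) * F i * h) m,
        Finset.sum_range_succ' (fun i => (W (i+1) - W i) * F i) m]
    have e0 : ∑ x ∈ Finset.range m, W (1+x) * F (1+x) * h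
        = ∑ x ∈ Finset.range m, W (x+1) * F (x+1) * h :=
      Finset.sum_congr rfl fun x _ => by rw [Nat.add_comm 1 x]
    have e1 : ∑ x ∈ Finset.range m, W (x+1+1) * F (x+1) * h
          - ∑ x ∈ Finset.range m, W (x+1) * F (x+1) * h
        = ∑ x ∈ Finset.range m, ((W (x+1+1) - W (x+1)) * F (x+1)) * h := by
      rw [← Finset.sum_sub_distrib]; exact Finset.sum_congr rfl fun x _ => by ring
    have e2 : ∑ x ∈ Finset.range m, ((W (x+1+1) - W (x+1)) * F (x+1)) * h
        = (∑ x ∈ Finset.range m, (W (x+1+1) - W (x+1)) * F (x+1)) * h := (Finset.sum_mul _ _ _).symm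
    linear_combination -e0 + e1 + e2
  rw [hT]
  -- the double-sum swap
  rw [swap_aux (fun i j => (W (i-j) - W (i-(j+1))) * (F i * G (j+1))) m]
  -- split top term of ∑_{i<m+1} F i * G (i+1)
  rw [Finset.sum_range_succ (fun i => F i * G (i+1)) m]
  -- split off (W (i+1) - W i) * F i * G 0 sums coincide
  have : ∑ i ∈ Finset.range (m+1), (W (i+1) - W i) * (F i * G 0)
      = G 0 * ∑ i ∈ Finset.range (m+1), (W (i+1) - W i) * F i := by
    rw [Finset.mul_sum]; exact Finset.sum_congr rfl fun j _ => by ring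
  rw [this]
  ring

/-- fractional `h`-summation by parts: with `0 < α ≤ 1`,
`γ = 1 − α`, `b = a + K·h`, for real-valued `f` on `𝕋^κ` and `g` on `𝕋`:
`∫_a^b f(t)(_aΔ_h^α g)(t)Δt
  = h^γ f(ρ(b))g(b) − h^γ f(a)g(a) + ∫_a^{ρ(b)} (_hΔ_{ρ(b)}^α f)(t) g(σ(t)) Δt
    + (γ/Γ(γ+1)) g(a) [ ∫_a^b (t+γh−a)_h^{(γ−1)} f(t)Δt
       − ∫_{σ(a)}^b (t+γh−σ(a))_h^{(γ−1)} f(t)Δt ]`. -/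
theorem stmt13 (a h : ℝ) (hh : 0 < h) (K : ℕ) (hK : 0 < K) (α γ : ℝ)
    (hα0 : 0 < α) (hα1 : α ≤ 1) (hγ : γ = 1 - α) (f g : ℝ → ℝ) :
    ∑ i ∈ Finset.range K, f (a + i * h) * hldiff a h α g i * h
      = h ^ γ * f (a + ((K - 1 : ℕ) : ℝ) * h) * g (a + K * h) - h ^ γ * f a * g a
        + ∑ i ∈ Finset.range (K - 1), hrdiff a h α f i (K - 1) * g (a + i * h + h) * h
        + γ / Real.Gamma (γ + 1) * g a *
            (∑ i ∈ Finset.range K,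
                hfac h ((a + i * h) + γ * h - a) (γ - 1) * f (a + i * h) * h
              - ∑ i ∈ Finset.Ico 1 K,
                  hfac h ((a + i * h) + γ * h - (a + h)) (γ - 1) * f (a + i * h) * h) := by
  obtain ⟨m, rfl⟩ : ∃ m, K = m + 1 := ⟨K - 1, by omega⟩
  simp only [Nat.add_sub_cancel]
  have hh' : h ≠ 0 := hh.ne'
  by_cases hγ0 : γ = 0
  · -- case γ = 0, i.e. α = 1
    have h10 : (1:ℝ) - α = 0 := by rw [← hγ]; exact hγ0
    simp only [hldiff, hlsum, hrdiff, hrsum, h10, hγ0, if_pos (Eq.refl (0:ℝ)),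
      Real.rpow_zero, one_mul, zero_div, zero_mul, add_zero, if_true]
    have e1 : ∀ i ∈ Finset.range (m+1),
        f (a + (i:ℝ) * h) * ((g (a + ((i+1:ℕ):ℝ) * h) - g (a + (i:ℝ) * h)) / h) * h
        = f (a + (i:ℝ) * h) * (g (a + ((i+1:ℕ):ℝ) * h) - g (a + (i:ℝ) * h)) := by
      intro i _; field_simp
    have e2 : ∀ i ∈ Finset.range m,
        -((f (a + ((i+1:ℕ):ℝ) * h) - f (a + (i:ℝ) * h)) / h) * g (a + (i:ℝ) * h + h) * h
        = -((f (a + ((i+1:ℕ):ℝ) * h) - f (a + (i:ℝ) * h)) * g (a + ((i+1:ℕ):ℝ) * h)) := by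
      intro i _
      have harg : a + (i:ℝ) * h + h = a + ((i+1:ℕ):ℝ) * h := by push_cast; ring
      rw [harg]; field_simp
    rw [Finset.sum_congr rfl e1, Finset.sum_congr rfl e2]
    have A := abel_summation_aux (fun i : ℕ => f (a + (i:ℝ) * h)) (fun i : ℕ => g (a + (i:ℝ) * h)) m
    simp only [Nat.cast_zero, zero_mul, add_zero] at A
    rw [A, Finset.sum_neg_distrib]
    ring
  · -- case γ ≠ 0
    have h10 : (1:ℝ) - α = γ := hγ.symm
    have hγpos : 0 < γ := by
      have h1 : 0 ≤ γ := by rw [hγ]; linarith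
      exact h1.lt_of_ne (Ne.symm hγ0)
    have hΓpos : 0 < Real.Gamma γ := Real.Gamma_pos_of_pos hγpos
    simp only [hldiff, hlsum, hrdiff, hrsum, h10, if_neg hγ0]
    set c : ℝ := 1 / Real.Gamma γ with hc
    set W : ℕ → ℝ := fun n => hfac h (((n:ℝ) - 1 + γ) * h) (γ - 1) with hW
    have hW0 : c * W 0 * h = h ^ γ := by
      simp only [hW, hfac, Nat.cast_zero]
      rw [mul_div_cancel_right₀ _ hh']
      have e1 : (0:ℝ) - 1 + γ + 1 = γ := by ring
      have e2 : (0:ℝ) - 1 + γ + 1 - (γ - 1) = 1 := by ring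
      rw [e2, e1, Real.Gamma_one]
      have e3 : h ^ (γ - 1) * h = h ^ γ := by
        rw [← Real.rpow_add_one hh' (γ - 1)]; norm_num
      rw [hc]
      field_simp
      linear_combination e3
    have hcoef : γ / Real.Gamma (γ + 1) = c := by
      rw [Real.Gamma_add_one hγ0, hc]
      rw [div_eq_div_iff (by positivity) hΓpos.ne']
      ring
    have convL : ∀ i ∈ Finset.range (m+1),
        f (a + (i:ℝ) * h) *
          ((c * ∑ j ∈ Finset.range (i+1+1),
              hfac h (a + ((i+1:ℕ):ℝ) * h + γ * h - (a + (j:ℝ) * h + h)) (γ-1) * g (a + (j:ℝ) * h) * h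
            - c * ∑ j ∈ Finset.range (i+1),
              hfac h (a + (i:ℝ) * h + γ * h - (a + (j:ℝ) * h + h)) (γ-1) * g (a + (j:ℝ) * h) * h) / h) * h
        = f (a + (i:ℝ) * h) *
            (c * ∑ j ∈ Finset.range (i+1+1), W (i+1-j) * g (a + (j:ℝ) * h) * h
             - c * ∑ j ∈ Finset.range (i+1), W (i-j) * g (a + (j:ℝ) * h) * h) := by
      intro i _
      have s1 : ∀ j ∈ Finset.range (i+1+1),
          hfac h (a + ((i+1:ℕ):ℝ) * h + γ * h - (a + (j:ℝ) * h + h)) (γ-1) * g (a + (j:ℝ) * h) * h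
          = W (i+1-j) * g (a + (j:ℝ) * h) * h := by
        intro j hj; simp only [Finset.mem_range] at hj
        have harg : a + ((i+1:ℕ):ℝ) * h + γ * h - (a + (j:ℝ) * h + h)
            = ((↑(i+1-j):ℝ) - 1 + γ) * h := by
          rw [Nat.cast_sub (by omega)]; push_cast; ring
        simp only [hW]; rw [harg]
      have s2 : ∀ j ∈ Finset.range (i+1),
          hfac h (a + (i:ℝ) * h + γ * h - (a + (j:ℝ) * h + h)) (γ-1) * g (a + (j:ℝ) * h) * h
          = W (i-j) * g (a + (j:ℝ) * h) * h := by
        intro j hj; simp only [Finset.mem_range] at hj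
        have harg : a + (i:ℝ) * h + γ * h - (a + (j:ℝ) * h + h)
            = ((↑(i-j):ℝ) - 1 + γ) * h := by
          rw [Nat.cast_sub (by omega)]; push_cast; ring
        simp only [hW]; rw [harg]
      rw [Finset.sum_congr rfl s1, Finset.sum_congr rfl s2]
      field_simp
    have convM : ∀ i ∈ Finset.range m,
        -((c * ∑ j ∈ Finset.Icc (i+1) m,
              hfac h (a + (j:ℝ) * h + γ * h - (a + ((i+1:ℕ):ℝ) * h + h)) (γ-1) * f (a + (j:ℝ) * h) * h
           - c * ∑ j ∈ Finset.Icc i m,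
              hfac h (a + (j:ℝ) * h + γ * h - (a + (i:ℝ) * h + h)) (γ-1) * f (a + (j:ℝ) * h) * h) / h)
          * g (a + (i:ℝ) * h + h) * h
        = (c * ∑ j ∈ Finset.Icc i m, W (j-i) * f (a + (j:ℝ) * h) * h
           - c * ∑ j ∈ Finset.Icc (i+1) m, W (j-(i+1)) * f (a + (j:ℝ) * h) * h) * g (a + ((i+1:ℕ):ℝ) * h) := by
      intro i _
      have s1 : ∀ j ∈ Finset.Icc (i+1) m,
          hfac h (a + (j:ℝ) * h + γ * h - (a + ((i+1:ℕ):ℝ) * h + h)) (γ-1) * f (a + (j:ℝ) * h) * h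
          = W (j-(i+1)) * f (a + (j:ℝ) * h) * h := by
        intro j hj; simp only [Finset.mem_Icc] at hj
        have harg : a + (j:ℝ) * h + γ * h - (a + ((i+1:ℕ):ℝ) * h + h)
            = ((↑(j-(i+1)):ℝ) - 1 + γ) * h := by
          rw [Nat.cast_sub hj.1]; push_cast; ring
        simp only [hW]; rw [harg]
      have s2 : ∀ j ∈ Finset.Icc i m,
          hfac h (a + (j:ℝ) * h + γ * h - (a + (i:ℝ) * h + h)) (γ-1) * f (a + (j:ℝ) * h) * h
          = W (j-i) * f (a + (j:ℝ) * h) * h := by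
        intro j hj; simp only [Finset.mem_Icc] at hj
        have harg : a + (j:ℝ) * h + γ * h - (a + (i:ℝ) * h + h)
            = ((↑(j-i):ℝ) - 1 + γ) * h := by
          rw [Nat.cast_sub hj.1]; push_cast; ring
        simp only [hW]; rw [harg]
      have hargG : a + (i:ℝ) * h + h = a + ((i+1:ℕ):ℝ) * h := by push_cast; ring
      rw [Finset.sum_congr rfl s1, Finset.sum_congr rfl s2, hargG]
      set S1 := ∑ j ∈ Finset.Icc (i+1) m, W (j-(i+1)) * f (a + (j:ℝ) * h) * h
      set S2 := ∑ j ∈ Finset.Icc i m, W (j-i) * f (a + (j:ℝ) * h) * h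
      have hinv : h * h⁻¹ = 1 := mul_inv_cancel₀ hh'
      linear_combination (-(c * S1 - c * S2) * g (a + ((i+1:ℕ):ℝ) * h)) * hinv
    have convT1 : ∀ i ∈ Finset.range (m+1),
        hfac h (a + (i:ℝ) * h + γ * h - a) (γ-1) * f (a + (i:ℝ) * h) * h
        = W (i+1) * f (a + (i:ℝ) * h) * h := by
      intro i _
      have harg : a + (i:ℝ) * h + γ * h - a = ((↑(i+1):ℝ) - 1 + γ) * h := by push_cast; ring
      simp only [hW]; rw [harg]
    have convT2 : ∀ i ∈ Finset.Ico 1 (m+1),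
        hfac h (a + (i:ℝ) * h + γ * h - (a + h)) (γ-1) * f (a + (i:ℝ) * h) * h
        = W i * f (a + (i:ℝ) * h) * h := by
      intro i _
      have harg : a + (i:ℝ) * h + γ * h - (a + h) = ((i:ℝ) - 1 + γ) * h := by push_cast; ring
      simp only [hW]; rw [harg]
    have main := key_s13 h c W (fun i : ℕ => f (a + (i:ℝ) * h)) (fun i : ℕ => g (a + (i:ℝ) * h)) m
    simp only [Nat.cast_zero, zero_mul, add_zero] at main
    rw [Finset.sum_congr rfl convL, Finset.sum_congr rfl convM, Finset.sum_congr rfl convT1,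
      Finset.sum_congr rfl convT2, hcoef, ← hW0]
    exact main
end

section
/- Let a ∈ ℝ, h > 0, b = a + kh with k ∈ ℕ, 𝕋 = {a, a+h, …, b}, 𝕋^κ = 𝕋∖{b}, 𝕋^{κ²} = 𝕋∖{b−h, b}. Fix α, β ∈ (0,1], A, B ∈ ℝ, and let L(t,u,v,w) : 𝕋^κ × ℝ³ → ℝ have continuous second-order partial derivatives L_{uu}, L_{uv}, L_{uw}, L_{vw}, L_{vv}, L_{ww}. Define 𝓛(y) = ∫_a^b L(t, y(σ(t)), ( _aΔ_h^α y )(t), ( _hΔ_b^β y )(t)) Δt. If ŷ : 𝕋 → ℝ with ŷ(a) = A and ŷ(b) = B is a local minimizer of 𝓛 among y : 𝕋 → ℝ with y(a) = A, y(b) = B (with respect to the norm ‖f‖ = max_{t∈𝕋^κ}|f(σ(t))| + max_{t∈𝕋^κ}|( _aΔ_h^α f )(t)| + max_{t∈𝕋^κ}|( _hΔ_b^β f )(t)|), then for all t ∈ 𝕋^{κ²}: L_u[ŷ](t) + ( _hΔ_{ρ(b)}^α (L_v[ŷ]) )(t) + ( _aΔ_h^β (L_w[ŷ]) )(t) = 0,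 where [y](s) = (s, y(σ(s)), ( _aΔ_h^α y )(s), ( _hΔ_b^β y )(s)) and L_u, L_v, L_w denote the partial derivatives of L with respect to its second, third and fourth arguments (h-fractional Euler–Lagrange equation). -/
/-- The left fractional `h`-sum `( _aΔ_h^{−ν} g )(t + νh)` at `t = a + i·h`, for
a function `g` on `𝕋 = {a, a+h, …}` represented by the sequence `g : ℕ → ℝ`,
`g j = g(a + j·h)`; for `ν = 0` it is `g(t)`. -/
noncomputable def hlsumS (a h ν : ℝ) (g : ℕ → ℝ) (i : ℕ) : ℝ :=
  if ν = 0 then g i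
  else (1 / Real.Gamma ν) *
    ∑ j ∈ Finset.range (i + 1),
      hfac h ((a + i * h) + ν * h - (a + j * h + h)) (ν - 1) * g j * h

/-- The right fractional `h`-sum `( _hΔ_c^{−ν} g )(t − νh)` at `t = a + i·h`
with right endpoint `c = a + m·h`; for `ν = 0` it is `g(t)`. -/
noncomputable def hrsumS (a h ν : ℝ) (g : ℕ → ℝ) (i m : ℕ) : ℝ :=
  if ν = 0 then g i
  else (1 / Real.Gamma ν) *
    ∑ j ∈ Finset.Icc i m,
      hfac h ((a + j * h) + ν * h - (a + i * h + h)) (ν - 1) * g j * h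

/-- The left fractional `h`-difference `( _aΔ_h^α g )(t)` at `t = a + i·h`. -/
noncomputable def hldiffS (a h α : ℝ) (g : ℕ → ℝ) (i : ℕ) : ℝ :=
  (hlsumS a h (1 - α) g (i + 1) - hlsumS a h (1 - α) g i) / h

/-- The right fractional `h`-difference `( _hΔ_c^α g )(t)` at `t = a + i·h`
with right endpoint `c = a + m·h`. -/
noncomputable def hrdiffS (a h α : ℝ) (g : ℕ → ℝ) (i m : ℕ) : ℝ :=
  -((hrsumS a h (1 - α) g (i + 1) m - hrsumS a h (1 - α) g i m) / h)

/-- The norm `‖f‖ = max_{t∈𝕋^κ}|f(σ(t))| + max|(_aΔ_h^α f)(t)| + max|(_hΔ_b^β f)(t)|`. -/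
noncomputable def hNorm (a h : ℝ) (K : ℕ) (α β : ℝ) (f : ℕ → ℝ) : ℝ :=
  (⨆ i : Fin K, |f ((i : ℕ) + 1)|) + (⨆ i : Fin K, |hldiffS a h α f (i : ℕ)|)
    + (⨆ i : Fin K, |hrdiffS a h β f (i : ℕ) K|)

/-- Evaluation of `P` along `[y](t) = (t, y(σ(t)), (_aΔ_h^α y)(t), (_hΔ_b^β y)(t))`
at `t = a + j·h`, with `b = a + K·h`. -/
noncomputable def alongH (a h α β : ℝ) (K : ℕ) (P : ℝ → ℝ → ℝ → ℝ → ℝ)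
    (y : ℕ → ℝ) (j : ℕ) : ℝ :=
  P (a + j * h) (y (j + 1)) (hldiffS a h α y j) (hrdiffS a h β y j K)

open scoped Topology

/-- Mean value bound on a real interval. -/
lemma mvt_bound (G G' : ℝ → ℝ) (hG : ∀ x, HasDerivAt G (G' x) x) (x y C : ℝ)
    (hC : ∀ z ∈ Set.uIcc x y, |G' z| ≤ C) : |G y - G x| ≤ C * |y - x| := by
  have := Convex.norm_image_sub_le_of_norm_hasDerivWithin_le
    (f := G) (f' := G') (s := Set.uIcc x y)
    (fun z _ => (hG z).hasDerivWithinAt) (fun z hz => hC z hz)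
    (convex_uIcc x y) Set.left_mem_uIcc Set.right_mem_uIcc
  simpa [Real.norm_eq_abs] using this

lemma hlsumS_lin (a h ν : ℝ) (f g : ℕ → ℝ) (c : ℝ) (i : ℕ) :
    hlsumS a h ν (fun j => f j + c * g j) i
      = hlsumS a h ν f i + c * hlsumS a h ν g i := by
  unfold hlsumS
  split_ifs
  · ring
  · simp only [Finset.mul_sum, ← Finset.sum_add_distrib]
    exact Finset.sum_congr rfl fun j _ => by ring

lemma hrsumS_lin (a h ν : ℝ) (f g : ℕ → ℝ) (c : ℝ) (i m : ℕ) :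
    hrsumS a h ν (fun j => f j + c * g j) i m
      = hrsumS a h ν f i m + c * hrsumS a h ν g i m := by
  unfold hrsumS
  split_ifs
  · ring
  · simp only [Finset.mul_sum, ← Finset.sum_add_distrib]
    exact Finset.sum_congr rfl fun j _ => by ring

lemma hldiffS_lin (a h α : ℝ) (f g : ℕ → ℝ) (c : ℝ) (i : ℕ) :
    hldiffS a h α (fun j => f j + c * g j) i
      = hldiffS a h α f i + c * hldiffS a h α g i := by
  unfold hldiffS
  rw [hlsumS_lin, hlsumS_lin]
  ring

lemma hrdiffS_lin (a h α : ℝ) (f g : ℕ → ℝ) (c : ℝ) (i m : ℕ) :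
    hrdiffS a h α (fun j => f j + c * g j) i m
      = hrdiffS a h α f i m + c * hrdiffS a h α g i m := by
  unfold hrdiffS
  rw [hrsumS_lin, hrsumS_lin]
  ring

lemma hlsumS_zero (a h ν : ℝ) (i : ℕ) : hlsumS a h ν (fun _ => (0:ℝ)) i = 0 := by
  unfold hlsumS; split_ifs <;> simp

lemma hrsumS_zero (a h ν : ℝ) (i m : ℕ) : hrsumS a h ν (fun _ => (0:ℝ)) i m = 0 := by
  unfold hrsumS; split_ifs <;> simp

lemma hldiffS_smul (a h α : ℝ) (g : ℕ → ℝ) (c : ℝ) (i : ℕ) :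
    hldiffS a h α (fun j => c * g j) i = c * hldiffS a h α g i := by
  have := hldiffS_lin a h α (fun _ => 0) g c i
  simpa [hldiffS, hlsumS_zero] using this

lemma hrdiffS_smul (a h α : ℝ) (g : ℕ → ℝ) (c : ℝ) (i m : ℕ) :
    hrdiffS a h α (fun j => c * g j) i m = c * hrdiffS a h α g i m := by
  have := hrdiffS_lin a h α (fun _ => 0) g c i m
  simpa [hrdiffS, hrsumS_zero] using this
/-- Kronecker delta sequence. -/
def dlt (m j : ℕ) : ℝ := if j = m then 1 else 0

lemma hlsumS_delta (a h ν : ℝ) (hν : ν ≠ 0) (m i : ℕ) :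
    hlsumS a h ν (dlt m) i
      = if m ≤ i then
          (1 / Real.Gamma ν) * (hfac h ((a + i * h) + ν * h - (a + m * h + h)) (ν - 1) * h)
        else 0 := by
  unfold hlsumS
  rw [if_neg hν]
  simp only [dlt, mul_ite, mul_one, mul_zero, ite_mul, zero_mul]
  rw [Finset.sum_ite_eq' (Finset.range (i + 1)) m]
  simp [Nat.lt_succ_iff]

lemma hrsumS_delta (a h ν : ℝ) (hν : ν ≠ 0) (m i K : ℕ) :
    hrsumS a h ν (dlt m) i K
      = if i ≤ m ∧ m ≤ K then
          (1 / Real.Gamma ν) * (hfac h ((a + m * h) + ν * h - (a + i * h + h)) (ν - 1) * h)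
        else 0 := by
  unfold hrsumS
  rw [if_neg hν]
  simp only [dlt, mul_ite, mul_one, mul_zero, ite_mul, zero_mul]
  rw [Finset.sum_ite_eq' (Finset.Icc i K) m]
  simp [Finset.mem_Icc]
lemma filter_range_eq_Icc (K m : ℕ) (hmK : m ≤ K) (hK : 1 ≤ K) :
    Finset.filter (fun i => m ≤ i) (Finset.range K) = Finset.Icc m (K - 1) := by
  ext j
  simp only [Finset.mem_filter, Finset.mem_range, Finset.mem_Icc]
  omega

lemma sum_Lv_id (a h : ℝ) (hh : h ≠ 0) (α : ℝ) (F : ℕ → ℝ) (K m : ℕ)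
    (hm : 1 ≤ m) (hmK : m < K) :
    ∑ i ∈ Finset.range K, F i * hldiffS a h α (dlt m) i
      = hrdiffS a h α F (m - 1) (K - 1) := by
  have hm1 : m - 1 + 1 = m := by omega
  by_cases hν : (1 : ℝ) - α = 0
  · simp only [hldiffS, hrdiffS, hlsumS, hrsumS, if_pos hν, hm1]
    have step : ∀ i ∈ Finset.range K,
        F i * ((dlt m (i + 1) - dlt m i) / h)
          = (if i = m - 1 then F i / h else 0) - (if i = m then F i / h else 0) := by
      intro i _
      by_cases c1 : i = m - 1
      · have : i + 1 = m := by omega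
        have : dlt m (i + 1) = 1 := by simp [dlt, this]
        have h2 : dlt m i = 0 := by simp [dlt]; omega
        rw [this, h2, if_pos c1, if_neg (by omega : ¬ i = m)]; ring
      · by_cases c2 : i = m
        · have h1 : dlt m (i + 1) = 0 := by simp [dlt]; omega
          have h2 : dlt m i = 1 := by simp [dlt, c2]
          rw [h1, h2, if_neg c1, if_pos c2]; ring
        · have h1 : dlt m (i + 1) = 0 := by simp [dlt]; omega
          have h2 : dlt m i = 0 := by simp [dlt]; omega
          rw [h1, h2, if_neg c1, if_neg c2]; ring
    rw [Finset.sum_congr rfl step, Finset.sum_sub_distrib,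
      Finset.sum_ite_eq' (Finset.range K) (m - 1),
      Finset.sum_ite_eq' (Finset.range K) m,
      if_pos (by simp [Finset.mem_range]; omega : m - 1 ∈ Finset.range K),
      if_pos (by simp [Finset.mem_range]; omega : m ∈ Finset.range K)]
    ring
  · -- fractional case
    set ν := (1 : ℝ) - α with hνdef
    set c := (1 : ℝ) / Real.Gamma ν with hc
    have key : ∀ i ∈ Finset.range K,
        F i * hldiffS a h α (dlt m) i
          = ((if m - 1 ≤ i then
                F i * (c * (hfac h ((a + (i+1) * h) + ν * h - (a + m * h + h)) (ν - 1) * h))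
              else 0)
            - (if m ≤ i then
                F i * (c * (hfac h ((a + i * h) + ν * h - (a + m * h + h)) (ν - 1) * h))
              else 0)) / h := by
      intro i _
      rw [hldiffS, ← hνdef, hlsumS_delta a h ν hν m (i+1), hlsumS_delta a h ν hν m i]
      push_cast
      by_cases c1 : m ≤ i
      · rw [if_pos (by omega : m ≤ i + 1), if_pos c1, if_pos (by omega : m - 1 ≤ i), if_pos c1]
        push_cast; ring
      · by_cases c3 : m - 1 ≤ i
        · rw [if_pos (by omega : m ≤ i + 1), if_neg c1, if_pos c3, if_neg c1]
          push_cast; ring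
        · rw [if_neg (by omega : ¬ m ≤ i + 1), if_neg c1, if_neg c3, if_neg c1]
          ring
    rw [Finset.sum_congr rfl key, ← Finset.sum_div, Finset.sum_sub_distrib,
      ← Finset.sum_filter, ← Finset.sum_filter,
      filter_range_eq_Icc K (m - 1) (by omega) (by omega),
      filter_range_eq_Icc K m (by omega) (by omega)]
    rw [hrdiffS, ← hνdef, hm1]
    unfold hrsumS
    rw [if_neg hν, if_neg hν]
    have e1 : ∑ i ∈ Finset.Icc (m - 1) (K - 1),
        F i * (c * (hfac h ((a + (↑i+1) * h) + ν * h - (a + m * h + h)) (ν - 1) * h))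
        = c * ∑ j ∈ Finset.Icc (m - 1) (K - 1),
            hfac h ((a + j * h) + ν * h - (a + ↑(m - 1) * h + h)) (ν - 1) * F j * h := by
      rw [Finset.mul_sum]
      refine Finset.sum_congr rfl fun i _ => ?_
      have harg : (a + (↑i + 1) * h) + ν * h - (a + ↑m * h + h)
          = (a + ↑i * h) + ν * h - (a + ↑(m - 1) * h + h) := by
        rw [Nat.cast_sub hm]; push_cast; ring
      rw [harg]; ring
    have e2 : ∑ i ∈ Finset.Icc m (K - 1),
        F i * (c * (hfac h ((a + ↑i * h) + ν * h - (a + m * h + h)) (ν - 1) * h))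
        = c * ∑ j ∈ Finset.Icc m (K - 1),
            hfac h ((a + j * h) + ν * h - (a + ↑m * h + h)) (ν - 1) * F j * h := by
      rw [Finset.mul_sum]
      exact Finset.sum_congr rfl fun i _ => by ring
    rw [e1, e2]
    ring
lemma filter_range_le (K n : ℕ) (hn : n < K) :
    Finset.filter (fun i => i ≤ n) (Finset.range K) = Finset.range (n + 1) := by
  ext j
  simp only [Finset.mem_filter, Finset.mem_range]
  omega

lemma filter_range_succ_le (K m : ℕ) (hm : m ≤ K) :
    Finset.filter (fun i => i + 1 ≤ m) (Finset.range K) = Finset.range m := by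
  ext j
  simp only [Finset.mem_filter, Finset.mem_range]
  omega

lemma sum_Lw_id (a h : ℝ) (β : ℝ) (F : ℕ → ℝ) (K m : ℕ)
    (hm : 1 ≤ m) (hmK : m < K) :
    ∑ i ∈ Finset.range K, F i * hrdiffS a h β (dlt m) i K
      = hldiffS a h β F (m - 1) := by
  have hm1 : m - 1 + 1 = m := by omega
  by_cases hν : (1 : ℝ) - β = 0
  · simp only [hldiffS, hrdiffS, hlsumS, hrsumS, if_pos hν, hm1]
    have step : ∀ i ∈ Finset.range K,
        F i * (-((dlt m (i + 1) - dlt m i) / h))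
          = (if i = m then F i / h else 0) - (if i = m - 1 then F i / h else 0) := by
      intro i _
      by_cases c1 : i = m - 1
      · have h1 : dlt m (i + 1) = 1 := by simp [dlt]; omega
        have h2 : dlt m i = 0 := by simp [dlt]; omega
        rw [h1, h2, if_pos c1, if_neg (by omega : ¬ i = m)]; ring
      · by_cases c2 : i = m
        · have h1 : dlt m (i + 1) = 0 := by simp [dlt]; omega
          have h2 : dlt m i = 1 := by simp [dlt, c2]
          rw [h1, h2, if_neg c1, if_pos c2]; ring
        · have h1 : dlt m (i + 1) = 0 := by simp [dlt]; omega
          have h2 : dlt m i = 0 := by simp [dlt]; omega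
          rw [h1, h2, if_neg c1, if_neg c2]; ring
    rw [Finset.sum_congr rfl step, Finset.sum_sub_distrib,
      Finset.sum_ite_eq' (Finset.range K) m,
      Finset.sum_ite_eq' (Finset.range K) (m - 1),
      if_pos (by simp [Finset.mem_range]; omega : m ∈ Finset.range K),
      if_pos (by simp [Finset.mem_range]; omega : m - 1 ∈ Finset.range K)]
    ring
  · set ν := (1 : ℝ) - β with hνdef
    set c := (1 : ℝ) / Real.Gamma ν with hc
    have key : ∀ i ∈ Finset.range K,
        F i * hrdiffS a h β (dlt m) i K
          = ((if i ≤ m then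
                F i * (c * (hfac h ((a + m * h) + ν * h - (a + i * h + h)) (ν - 1) * h))
              else 0)
            - (if i + 1 ≤ m then
                F i * (c * (hfac h ((a + m * h) + ν * h - (a + (i+1) * h + h)) (ν - 1) * h))
              else 0)) / h := by
      intro i _
      rw [hrdiffS, ← hνdef, hrsumS_delta a h ν hν m (i+1) K, hrsumS_delta a h ν hν m i K]
      have hmK' : m ≤ K := by omega
      by_cases c1 : i + 1 ≤ m
      · rw [if_pos ⟨c1, hmK'⟩, if_pos ⟨by omega, hmK'⟩, if_pos (by omega : i ≤ m), if_pos c1]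
        push_cast; ring
      · by_cases c2 : i ≤ m
        · rw [if_neg (by omega : ¬ (i + 1 ≤ m ∧ m ≤ K)), if_pos ⟨c2, hmK'⟩, if_pos c2, if_neg c1]
          ring
        · rw [if_neg (by omega : ¬ (i + 1 ≤ m ∧ m ≤ K)),
            if_neg (by omega : ¬ (i ≤ m ∧ m ≤ K)), if_neg c2, if_neg c1]
          ring
    rw [Finset.sum_congr rfl key, ← Finset.sum_div, Finset.sum_sub_distrib,
      ← Finset.sum_filter, ← Finset.sum_filter,
      filter_range_le K m hmK, filter_range_succ_le K m (by omega)]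
    rw [hldiffS, ← hνdef, hm1]
    unfold hlsumS
    rw [if_neg hν, if_neg hν, hm1]
    have e1 : ∑ i ∈ Finset.range (m + 1),
        F i * (c * (hfac h ((a + m * h) + ν * h - (a + ↑i * h + h)) (ν - 1) * h))
        = c * ∑ j ∈ Finset.range (m + 1),
            hfac h ((a + ↑m * h) + ν * h - (a + j * h + h)) (ν - 1) * F j * h := by
      rw [Finset.mul_sum]
      exact Finset.sum_congr rfl fun i _ => by ring
    have e2 : ∑ i ∈ Finset.range m,
        F i * (c * (hfac h ((a + m * h) + ν * h - (a + (↑i+1) * h + h)) (ν - 1) * h))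
        = c * ∑ j ∈ Finset.range m,
            hfac h ((a + ↑(m - 1) * h) + ν * h - (a + j * h + h)) (ν - 1) * F j * h := by
      rw [Finset.mul_sum]
      refine Finset.sum_congr rfl fun i _ => ?_
      have harg : (a + ↑m * h) + ν * h - (a + (↑i + 1) * h + h)
          = (a + ↑(m - 1) * h) + ν * h - (a + ↑i * h + h) := by
        rw [Nat.cast_sub hm]; push_cast; ring
      rw [harg]; ring
    rw [e1, e2]
lemma mem_uIcc_abs {z x y : ℝ} (hz : z ∈ Set.uIcc x y) : |z - x| ≤ |y - x| := by
  rcases Set.mem_uIcc.mp hz with ⟨h1, h2⟩ | ⟨h1, h2⟩ <;> rw [abs_le] <;> constructor <;>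
    cases' abs_cases (y - x) with hc hc <;> linarith [hc.1, hc.2]

lemma cont3 (F F1 F2 F3 : ℝ → ℝ → ℝ → ℝ)
    (h1 : ∀ u v w, HasDerivAt (fun x => F x v w) (F1 u v w) u)
    (h2 : ∀ u v w, HasDerivAt (fun x => F u x w) (F2 u v w) v)
    (h3 : ∀ u v w, HasDerivAt (fun x => F u v x) (F3 u v w) w)
    (hc1 : Continuous fun p : ℝ × ℝ × ℝ => F1 p.1 p.2.1 p.2.2)
    (hc2 : Continuous fun p : ℝ × ℝ × ℝ => F2 p.1 p.2.1 p.2.2) :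
    Continuous fun p : ℝ × ℝ × ℝ => F p.1 p.2.1 p.2.2 := by
  rw [continuous_iff_continuousAt]
  rintro ⟨u0, v0, w0⟩
  rw [Metric.continuousAt_iff]
  intro ε hε
  have hbox : IsCompact ((Set.Icc (u0-1) (u0+1)) ×ˢ (Set.Icc (v0-1) (v0+1) ×ˢ Set.Icc (w0-1) (w0+1))) :=
    isCompact_Icc.prod (isCompact_Icc.prod isCompact_Icc)
  obtain ⟨M1, hM1⟩ := hbox.exists_bound_of_continuousOn hc1.continuousOn
  obtain ⟨M2, hM2⟩ := hbox.exists_bound_of_continuousOn hc2.continuousOn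
  obtain ⟨M, hMpos, hMle1, hMle2⟩ : ∃ M : ℝ, 0 < M ∧ M1 ≤ M ∧ M2 ≤ M :=
    ⟨|M1| + |M2| + 1, by positivity,
      by cases' abs_cases M1 with hc hc <;> cases' abs_cases M2 with hc2 hc2 <;> linarith,
      by cases' abs_cases M1 with hc hc <;> cases' abs_cases M2 with hc2 hc2 <;> linarith⟩
  obtain ⟨δ3, hδ3, hδ3'⟩ := Metric.continuousAt_iff.1 (h3 u0 v0 w0).continuousAt (ε/3) (by positivity)
  refine ⟨min (min 1 δ3) (ε/(3*M)), by positivity, ?_⟩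
  rintro ⟨u, v, w⟩ hd
  simp only [Prod.dist_eq, Real.dist_eq, max_lt_iff] at hd
  obtain ⟨hu, hv, hw⟩ := hd
  have hu1 : |u - u0| < 1 := lt_of_lt_of_le hu ((min_le_left _ _).trans (min_le_left _ _))
  have hv1 : |v - v0| < 1 := lt_of_lt_of_le hv ((min_le_left _ _).trans (min_le_left _ _))
  have hw1 : |w - w0| < 1 := lt_of_lt_of_le hw ((min_le_left _ _).trans (min_le_left _ _))
  have hw3 : |w - w0| < δ3 := lt_of_lt_of_le hw ((min_le_left _ _).trans (min_le_right _ _))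
  have hu2 : |u - u0| < ε/(3*M) := lt_of_lt_of_le hu (min_le_right _ _)
  have hv2 : |v - v0| < ε/(3*M) := lt_of_lt_of_le hv (min_le_right _ _)
  have t1 : |F u v w - F u0 v w| ≤ M * |u - u0| := by
    refine mvt_bound (fun x => F x v w) (fun x => F1 x v w) (fun x => h1 x v w) u0 u M ?_
    intro z hz
    have hz1 : |z - u0| ≤ 1 := (mem_uIcc_abs hz).trans hu1.le
    have hmem : ((z, v, w) : ℝ × ℝ × ℝ) ∈
        ((Set.Icc (u0-1) (u0+1)) ×ˢ (Set.Icc (v0-1) (v0+1) ×ˢ Set.Icc (w0-1) (w0+1))) := by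
      refine ⟨Set.mem_Icc.2 ⟨?_, ?_⟩, Set.mem_Icc.2 ⟨?_, ?_⟩, Set.mem_Icc.2 ⟨?_, ?_⟩⟩ <;>
        linarith [abs_le.1 hz1, abs_le.1 hv1.le, abs_le.1 hw1.le]
    have hb := hM1 (z, v, w) hmem
    simp only [Real.norm_eq_abs] at hb
    exact hb.trans hMle1
  have t2 : |F u0 v w - F u0 v0 w| ≤ M * |v - v0| := by
    refine mvt_bound (fun x => F u0 x w) (fun x => F2 u0 x w) (fun x => h2 u0 x w) v0 v M ?_
    intro z hz
    have hz1 : |z - v0| ≤ 1 := (mem_uIcc_abs hz).trans hv1.le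
    have hmem : ((u0, z, w) : ℝ × ℝ × ℝ) ∈
        ((Set.Icc (u0-1) (u0+1)) ×ˢ (Set.Icc (v0-1) (v0+1) ×ˢ Set.Icc (w0-1) (w0+1))) := by
      refine ⟨Set.mem_Icc.2 ⟨?_, ?_⟩, Set.mem_Icc.2 ⟨?_, ?_⟩, Set.mem_Icc.2 ⟨?_, ?_⟩⟩ <;>
        linarith [abs_le.1 hz1, abs_le.1 hw1.le]
    have hb := hM2 (u0, z, w) hmem
    simp only [Real.norm_eq_abs] at hb
    exact hb.trans hMle2
  have t3 : |F u0 v0 w - F u0 v0 w0| < ε/3 := by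
    have := hδ3' (show dist w w0 < δ3 by rw [Real.dist_eq]; exact hw3)
    rwa [Real.dist_eq] at this
  have hMe : M * (ε/(3*M)) = ε/3 := by field_simp; try ring
  have hb1 : |F u v w - F u0 v w| < ε/3 := by
    have := mul_lt_mul_of_pos_left hu2 hMpos; linarith
  have hb2 : |F u0 v w - F u0 v0 w| < ε/3 := by
    have := mul_lt_mul_of_pos_left hv2 hMpos; linarith
  rw [Real.dist_eq]
  calc |F u v w - F u0 v0 w0|
      ≤ |F u v w - F u0 v w| + |F u0 v w - F u0 v0 w0| := abs_sub_le _ _ _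
    _ ≤ |F u v w - F u0 v w| + (|F u0 v w - F u0 v0 w| + |F u0 v0 w - F u0 v0 w0|) := by
        linarith [abs_sub_le (F u0 v w) (F u0 v0 w) (F u0 v0 w0)]
    _ < ε := by linarith [hb1, hb2, t3]

lemma cont2 (F F1 F2 : ℝ → ℝ → ℝ)
    (h1 : ∀ v w, HasDerivAt (fun x => F x w) (F1 v w) v)
    (h2 : ∀ v w, HasDerivAt (fun x => F v x) (F2 v w) w)
    (hc1 : Continuous fun p : ℝ × ℝ => F1 p.1 p.2) :
    Continuous fun p : ℝ × ℝ => F p.1 p.2 := by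
  rw [continuous_iff_continuousAt]
  rintro ⟨v0, w0⟩
  rw [Metric.continuousAt_iff]
  intro ε hε
  have hbox : IsCompact ((Set.Icc (v0-1) (v0+1)) ×ˢ (Set.Icc (w0-1) (w0+1))) :=
    isCompact_Icc.prod isCompact_Icc
  obtain ⟨M1, hM1⟩ := hbox.exists_bound_of_continuousOn hc1.continuousOn
  obtain ⟨M, hMpos, hMle⟩ : ∃ M : ℝ, 0 < M ∧ M1 ≤ M :=
    ⟨|M1| + 1, by positivity, by cases' abs_cases M1 with hc hc <;> linarith⟩
  obtain ⟨δ3, hδ3, hδ3'⟩ := Metric.continuousAt_iff.1 (h2 v0 w0).continuousAt (ε/2) (by positivity)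
  refine ⟨min (min 1 δ3) (ε/(2*M)), by positivity, ?_⟩
  rintro ⟨v, w⟩ hd
  simp only [Prod.dist_eq, Real.dist_eq, max_lt_iff] at hd
  obtain ⟨hv, hw⟩ := hd
  have hv1 : |v - v0| < 1 := lt_of_lt_of_le hv ((min_le_left _ _).trans (min_le_left _ _))
  have hw1 : |w - w0| < 1 := lt_of_lt_of_le hw ((min_le_left _ _).trans (min_le_left _ _))
  have hw3 : |w - w0| < δ3 := lt_of_lt_of_le hw ((min_le_left _ _).trans (min_le_right _ _))
  have hv2 : |v - v0| < ε/(2*M) := lt_of_lt_of_le hv (min_le_right _ _)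
  have t1 : |F v w - F v0 w| ≤ M * |v - v0| := by
    refine mvt_bound (fun x => F x w) (fun x => F1 x w) (fun x => h1 x w) v0 v M ?_
    intro z hz
    have hz1 : |z - v0| ≤ 1 := (mem_uIcc_abs hz).trans hv1.le
    have hmem : ((z, w) : ℝ × ℝ) ∈ ((Set.Icc (v0-1) (v0+1)) ×ˢ (Set.Icc (w0-1) (w0+1))) := by
      refine ⟨Set.mem_Icc.2 ⟨?_, ?_⟩, Set.mem_Icc.2 ⟨?_, ?_⟩⟩ <;>
        linarith [abs_le.1 hz1, abs_le.1 hw1.le]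
    have hb := hM1 (z, w) hmem
    simp only [Real.norm_eq_abs] at hb
    exact hb.trans hMle
  have t2 : |F v0 w - F v0 w0| < ε/2 := by
    have := hδ3' (show dist w w0 < δ3 by rw [Real.dist_eq]; exact hw3)
    rwa [Real.dist_eq] at this
  have hMe : M * (ε/(2*M)) = ε/2 := by field_simp; try ring
  have hb1 : |F v w - F v0 w| < ε/2 := by
    have := mul_lt_mul_of_pos_left hv2 hMpos; linarith
  rw [Real.dist_eq]
  calc |F v w - F v0 w0|
      ≤ |F v w - F v0 w| + |F v0 w - F v0 w0| := abs_sub_le _ _ _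
    _ < ε := by linarith [hb1, t2]
lemma hasDerivAt_partA (F Fu : ℝ → ℝ → ℝ → ℝ)
    (hu : ∀ u v w, HasDerivAt (fun x => F x v w) (Fu u v w) u)
    (u v w p q r : ℝ)
    (hcu : ContinuousAt (fun P : ℝ × ℝ × ℝ => Fu P.1 P.2.1 P.2.2) (u, v, w)) :
    HasDerivAt (fun ε : ℝ =>
        F (u + ε * p) (v + ε * q) (w + ε * r) - F u (v + ε * q) (w + ε * r))
      (Fu u v w * p) 0 := by
  rw [hasDerivAt_iff_tendsto_slope]
  rw [Metric.tendsto_nhdsWithin_nhds]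
  intro ε' hε'
  have hS : (0:ℝ) < |p| + |q| + |r| + 1 := by positivity
  obtain ⟨ρ, hρ, hρ'⟩ := Metric.continuousAt_iff.1 hcu (ε' / (|p| + |q| + |r| + 1))
    (by positivity)
  refine ⟨ρ / (|p| + |q| + |r| + 1), by positivity, ?_⟩
  intro x hx hdx
  have hx0 : x ≠ 0 := hx
  rw [Real.dist_eq, sub_zero] at hdx
  have hxS : |x| * (|p| + |q| + |r| + 1) < ρ := by
    have := mul_lt_mul_of_pos_right hdx hS
    rwa [div_mul_cancel₀ _ (ne_of_gt hS)] at this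
  -- MVT bound
  have key := mvt_bound
    (fun z => F z (v + x * q) (w + x * r) - z * Fu u v w)
    (fun z => Fu z (v + x * q) (w + x * r) - Fu u v w)
    (fun z => (hu z (v + x * q) (w + x * r)).sub (hasDerivAt_mul_const (Fu u v w)))
    u (u + x * p) (ε' / (|p| + |q| + |r| + 1)) ?_
  · have e : (F (u + x * p) (v + x * q) (w + x * r) - (u + x * p) * Fu u v w)
        - (F u (v + x * q) (w + x * r) - u * Fu u v w)
        = (F (u + x * p) (v + x * q) (w + x * r) - F u (v + x * q) (w + x * r))
          - x * (Fu u v w * p) := by ring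
    rw [e, show u + x * p - u = x * p from by ring] at key
    -- slope computation
    rw [Real.dist_eq, slope_def_field]
    have hsl : (F (u + x * p) (v + x * q) (w + x * r) - F u (v + x * q) (w + x * r)
          - (F (u + 0 * p) (v + 0 * q) (w + 0 * r) - F u (v + 0 * q) (w + 0 * r))) / (x - 0)
          - Fu u v w * p
        = ((F (u + x * p) (v + x * q) (w + x * r) - F u (v + x * q) (w + x * r))
            - x * (Fu u v w * p)) / x := by
      rw [show u + 0 * p = u from by ring, show v + 0 * q = v from by ring,
        show w + 0 * r = w from by ring]
      field_simp
      ring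
    rw [hsl, abs_div]
    have hb : |F (u + x * p) (v + x * q) (w + x * r) - F u (v + x * q) (w + x * r)
        - x * (Fu u v w * p)| / |x| ≤ (ε' / (|p| + |q| + |r| + 1)) * |p| := by
      rw [div_le_iff₀ (abs_pos.2 hx0)]
      calc |F (u + x * p) (v + x * q) (w + x * r) - F u (v + x * q) (w + x * r)
            - x * (Fu u v w * p)| ≤ ε' / (|p| + |q| + |r| + 1) * |x * p| := key
        _ = ε' / (|p| + |q| + |r| + 1) * |p| * |x| := by rw [abs_mul]; ring
    refine lt_of_le_of_lt hb ?_
    have h1 : |p| < |p| + |q| + |r| + 1 := by nlinarith [abs_nonneg q, abs_nonneg r]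
    calc ε' / (|p| + |q| + |r| + 1) * |p|
        < ε' / (|p| + |q| + |r| + 1) * (|p| + |q| + |r| + 1) := by
          apply mul_lt_mul_of_pos_left h1 (by positivity)
    _ = ε' := by field_simp
  · intro z hz
    have hz1 : |z - u| ≤ |x * p| := by
      have := mem_uIcc_abs hz
      rwa [show u + x * p - u = x * p from by ring] at this
    have hd : dist ((z, v + x * q, w + x * r) : ℝ × ℝ × ℝ) ((u, v, w) : ℝ × ℝ × ℝ) < ρ := by
      simp only [Prod.dist_eq, Real.dist_eq]
      rw [max_lt_iff, max_lt_iff]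
      have e1 : v + x * q - v = x * q := by ring
      have e2 : w + x * r - w = x * r := by ring
      rw [e1, e2, abs_mul, abs_mul]
      refine ⟨?_, ?_, ?_⟩
      · have : |x * p| ≤ |x| * (|p| + |q| + |r| + 1) := by
          rw [abs_mul]; nlinarith [abs_nonneg x, abs_nonneg q, abs_nonneg r]
        linarith [hz1.trans this]
      · nlinarith [abs_nonneg x, abs_nonneg p, abs_nonneg r, abs_nonneg q]
      · nlinarith [abs_nonneg x, abs_nonneg p, abs_nonneg r, abs_nonneg q]
    have := hρ' hd
    rw [Real.dist_eq] at this
    exact this.le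
lemma hasDerivAt_partB (F Fv : ℝ → ℝ → ℝ)
    (hv : ∀ v w, HasDerivAt (fun x => F x w) (Fv v w) v)
    (v w q r : ℝ)
    (hcv : ContinuousAt (fun P : ℝ × ℝ => Fv P.1 P.2) (v, w)) :
    HasDerivAt (fun ε : ℝ => F (v + ε * q) (w + ε * r) - F v (w + ε * r))
      (Fv v w * q) 0 := by
  rw [hasDerivAt_iff_tendsto_slope]
  rw [Metric.tendsto_nhdsWithin_nhds]
  intro ε' hε'
  have hS : (0:ℝ) < |q| + |r| + 1 := by positivity
  obtain ⟨ρ, hρ, hρ'⟩ := Metric.continuousAt_iff.1 hcv (ε' / (|q| + |r| + 1)) (by positivity)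
  refine ⟨ρ / (|q| + |r| + 1), by positivity, ?_⟩
  intro x hx hdx
  have hx0 : x ≠ 0 := hx
  rw [Real.dist_eq, sub_zero] at hdx
  have hxS : |x| * (|q| + |r| + 1) < ρ := by
    have := mul_lt_mul_of_pos_right hdx hS
    rwa [div_mul_cancel₀ _ (ne_of_gt hS)] at this
  have key := mvt_bound
    (fun z => F z (w + x * r) - z * Fv v w)
    (fun z => Fv z (w + x * r) - Fv v w)
    (fun z => (hv z (w + x * r)).sub (hasDerivAt_mul_const (Fv v w)))
    v (v + x * q) (ε' / (|q| + |r| + 1)) ?_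
  · have e : (F (v + x * q) (w + x * r) - (v + x * q) * Fv v w)
        - (F v (w + x * r) - v * Fv v w)
        = (F (v + x * q) (w + x * r) - F v (w + x * r)) - x * (Fv v w * q) := by ring
    rw [e, show v + x * q - v = x * q from by ring] at key
    rw [Real.dist_eq, slope_def_field]
    have hsl : (F (v + x * q) (w + x * r) - F v (w + x * r)
          - (F (v + 0 * q) (w + 0 * r) - F v (w + 0 * r))) / (x - 0)
          - Fv v w * q
        = ((F (v + x * q) (w + x * r) - F v (w + x * r)) - x * (Fv v w * q)) / x := by
      rw [show v + 0 * q = v from by ring, show w + 0 * r = w from by ring]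
      field_simp
      ring
    rw [hsl, abs_div]
    have hb : |F (v + x * q) (w + x * r) - F v (w + x * r) - x * (Fv v w * q)| / |x|
        ≤ (ε' / (|q| + |r| + 1)) * |q| := by
      rw [div_le_iff₀ (abs_pos.2 hx0)]
      calc |F (v + x * q) (w + x * r) - F v (w + x * r) - x * (Fv v w * q)|
          ≤ ε' / (|q| + |r| + 1) * |x * q| := key
        _ = ε' / (|q| + |r| + 1) * |q| * |x| := by rw [abs_mul]; ring
    refine lt_of_le_of_lt hb ?_
    have h1 : |q| < |q| + |r| + 1 := by nlinarith [abs_nonneg r]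
    calc ε' / (|q| + |r| + 1) * |q|
        < ε' / (|q| + |r| + 1) * (|q| + |r| + 1) := by
          apply mul_lt_mul_of_pos_left h1 (by positivity)
    _ = ε' := by field_simp
  · intro z hz
    have hz1 : |z - v| ≤ |x * q| := by
      have := mem_uIcc_abs hz
      rwa [show v + x * q - v = x * q from by ring] at this
    have hd : dist ((z, w + x * r) : ℝ × ℝ) ((v, w) : ℝ × ℝ) < ρ := by
      simp only [Prod.dist_eq, Real.dist_eq]
      rw [max_lt_iff]
      rw [show w + x * r - w = x * r from by ring, abs_mul]
      constructor
      · have : |x * q| ≤ |x| * (|q| + |r| + 1) := by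
          rw [abs_mul]; nlinarith [abs_nonneg x, abs_nonneg r]
        linarith [hz1.trans this]
      · nlinarith [abs_nonneg x, abs_nonneg q, abs_nonneg r]
    have := hρ' hd
    rw [Real.dist_eq] at this
    exact this.le

lemma hasDerivAt_line (F Fu Fv Fw : ℝ → ℝ → ℝ → ℝ)
    (hu : ∀ u v w, HasDerivAt (fun x => F x v w) (Fu u v w) u)
    (hv : ∀ u v w, HasDerivAt (fun x => F u x w) (Fv u v w) v)
    (hw : ∀ u v w, HasDerivAt (fun x => F u v x) (Fw u v w) w)
    (u v w p q r : ℝ)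
    (hcu : ContinuousAt (fun P : ℝ × ℝ × ℝ => Fu P.1 P.2.1 P.2.2) (u, v, w))
    (hcv : ContinuousAt (fun P : ℝ × ℝ => Fv u P.1 P.2) (v, w)) :
    HasDerivAt (fun ε : ℝ => F (u + ε * p) (v + ε * q) (w + ε * r))
      (Fu u v w * p + Fv u v w * q + Fw u v w * r) 0 := by
  have hA := hasDerivAt_partA F Fu hu u v w p q r hcu
  have hB := hasDerivAt_partB (fun v' w' => F u v' w') (fun v' w' => Fv u v' w')
    (fun v' w' => hv u v' w') v w q r hcv
  have hC : HasDerivAt (fun ε : ℝ => F u v (w + ε * r)) (Fw u v w * r) 0 := by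
    have hin : HasDerivAt (fun ε : ℝ => w + ε * r) r 0 := by
      simpa using ((hasDerivAt_id (0:ℝ)).mul_const r).const_add w
    have h2 : HasDerivAt (fun x => F u v x) (Fw u v w) ((fun ε : ℝ => w + ε * r) 0) := by
      simpa using hw u v w
    exact h2.comp 0 hin
  have heq : (fun ε : ℝ => F (u + ε * p) (v + ε * q) (w + ε * r))
      = fun ε : ℝ => ((F (u + ε * p) (v + ε * q) (w + ε * r) - F u (v + ε * q) (w + ε * r))
          + (F u (v + ε * q) (w + ε * r) - F u v (w + ε * r))) + F u v (w + ε * r) := by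
    funext ε; ring
  rw [heq, show Fu u v w * p + Fv u v w * q + Fw u v w * r
      = (Fu u v w * p + Fv u v w * q) + Fw u v w * r from by ring]
  exact (hA.add hB).add hC
lemma sum_Lu_id (F : ℕ → ℝ) (K m : ℕ) (hm : 1 ≤ m) (hmK : m ≤ K) :
    ∑ j ∈ Finset.range K, F j * dlt m (j + 1) = F (m - 1) := by
  have step : ∀ j ∈ Finset.range K, F j * dlt m (j + 1)
      = if j = m - 1 then F j else 0 := by
    intro j _
    by_cases c : j = m - 1
    · have hj : j + 1 = m := by omega
      have hm1 : m - 1 + 1 = m := by omega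
      simp [dlt, hj, c, hm1]
    · have hj : ¬ (j + 1 = m) := by omega
      simp [dlt, hj, c]
  rw [Finset.sum_congr rfl step, Finset.sum_ite_eq' (Finset.range K) (m - 1),
    if_pos (by simp only [Finset.mem_range]; omega : m - 1 ∈ Finset.range K)]

lemma hNorm_nonneg (a h : ℝ) (K : ℕ) (hK : 0 < K) (α β : ℝ) (g : ℕ → ℝ) :
    0 ≤ hNorm a h K α β g := by
  have hne : Nonempty (Fin K) := ⟨⟨0, hK⟩⟩
  unfold hNorm
  have b1 : (0:ℝ) ≤ ⨆ i : Fin K, |g ((i:ℕ) + 1)| :=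
    le_trans (abs_nonneg (g ((0:ℕ) + 1)))
      (le_ciSup (f := fun i : Fin K => |g ((i:ℕ) + 1)|)
        (Set.Finite.bddAbove (Set.finite_range _)) (⟨0, hK⟩ : Fin K))
  have b2 : (0:ℝ) ≤ ⨆ i : Fin K, |hldiffS a h α g (i:ℕ)| :=
    le_trans (abs_nonneg (hldiffS a h α g 0))
      (le_ciSup (f := fun i : Fin K => |hldiffS a h α g (i:ℕ)|)
        (Set.Finite.bddAbove (Set.finite_range _)) (⟨0, hK⟩ : Fin K))
  have b3 : (0:ℝ) ≤ ⨆ i : Fin K, |hrdiffS a h β g (i:ℕ) K| :=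
    le_trans (abs_nonneg (hrdiffS a h β g 0 K))
      (le_ciSup (f := fun i : Fin K => |hrdiffS a h β g (i:ℕ) K|)
        (Set.Finite.bddAbove (Set.finite_range _)) (⟨0, hK⟩ : Fin K))
  linarith

lemma hNorm_smul_le (a h : ℝ) (K : ℕ) (hK : 0 < K) (α β c : ℝ) (g : ℕ → ℝ) :
    hNorm a h K α β (fun j => c * g j) ≤ |c| * hNorm a h K α β g := by
  have hne : Nonempty (Fin K) := ⟨⟨0, hK⟩⟩
  unfold hNorm
  simp only [hldiffS_smul, hrdiffS_smul, abs_mul]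
  have b1 : (⨆ i : Fin K, |c| * |g ((i:ℕ) + 1)|) ≤ |c| * ⨆ i : Fin K, |g ((i:ℕ) + 1)| :=
    ciSup_le fun i => mul_le_mul_of_nonneg_left
      (le_ciSup (f := fun i : Fin K => |g ((i:ℕ) + 1)|)
        (Set.Finite.bddAbove (Set.finite_range _)) i) (abs_nonneg c)
  have b2 : (⨆ i : Fin K, |c| * |hldiffS a h α g (i:ℕ)|)
      ≤ |c| * ⨆ i : Fin K, |hldiffS a h α g (i:ℕ)| :=
    ciSup_le fun i => mul_le_mul_of_nonneg_left
      (le_ciSup (f := fun i : Fin K => |hldiffS a h α g (i:ℕ)|)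
        (Set.Finite.bddAbove (Set.finite_range _)) i) (abs_nonneg c)
  have b3 : (⨆ i : Fin K, |c| * |hrdiffS a h β g (i:ℕ) K|)
      ≤ |c| * ⨆ i : Fin K, |hrdiffS a h β g (i:ℕ) K| :=
    ciSup_le fun i => mul_le_mul_of_nonneg_left
      (le_ciSup (f := fun i : Fin K => |hrdiffS a h β g (i:ℕ) K|)
        (Set.Finite.bddAbove (Set.finite_range _)) i) (abs_nonneg c)
  linarith

/-- STATEMENT 14 (`h`-fractional Euler–Lagrange equation) on
`𝕋 = {a, a+h, …, a+K·h}`; trajectories `y : 𝕋 → ℝ` are represented as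
sequences `y : ℕ → ℝ` with `y j = y(a + j·h)`. -/
theorem stmt14 (a h : ℝ) (hh : 0 < h) (K : ℕ) (hK : 0 < K) (α β : ℝ)
    (hα0 : 0 < α) (hα1 : α ≤ 1) (hβ0 : 0 < β) (hβ1 : β ≤ 1)
    (A B : ℝ) (L Lu Lv Lw Luu Luv Luw Lvv Lvw Lww : ℝ → ℝ → ℝ → ℝ → ℝ)
    (hLu : ∀ t u v w, HasDerivAt (fun x => L t x v w) (Lu t u v w) u)
    (hLv : ∀ t u v w, HasDerivAt (fun x => L t u x w) (Lv t u v w) v)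
    (hLw : ∀ t u v w, HasDerivAt (fun x => L t u v x) (Lw t u v w) w)
    (hLuu : ∀ t u v w, HasDerivAt (fun x => Lu t x v w) (Luu t u v w) u)
    (hLuv : ∀ t u v w, HasDerivAt (fun x => Lu t u x w) (Luv t u v w) v)
    (hLuw : ∀ t u v w, HasDerivAt (fun x => Lu t u v x) (Luw t u v w) w)
    (hLvv : ∀ t u v w, HasDerivAt (fun x => Lv t u x w) (Lvv t u v w) v)
    (hLvw : ∀ t u v w, HasDerivAt (fun x => Lv t u v x) (Lvw t u v w) w)
    (hLww : ∀ t u v w, HasDerivAt (fun x => Lw t u v x) (Lww t u v w) w)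
    (hCuu : ∀ t, Continuous fun p : ℝ × ℝ × ℝ => Luu t p.1 p.2.1 p.2.2)
    (hCuv : ∀ t, Continuous fun p : ℝ × ℝ × ℝ => Luv t p.1 p.2.1 p.2.2)
    (hCuw : ∀ t, Continuous fun p : ℝ × ℝ × ℝ => Luw t p.1 p.2.1 p.2.2)
    (hCvv : ∀ t, Continuous fun p : ℝ × ℝ × ℝ => Lvv t p.1 p.2.1 p.2.2)
    (hCvw : ∀ t, Continuous fun p : ℝ × ℝ × ℝ => Lvw t p.1 p.2.1 p.2.2)
    (hCww : ∀ t, Continuous fun p : ℝ × ℝ × ℝ => Lww t p.1 p.2.1 p.2.2)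
    (yhat : ℕ → ℝ) (hyA : yhat 0 = A) (hyB : yhat K = B)
    (hmin : ∃ δ > 0, ∀ y : ℕ → ℝ, y 0 = A → y K = B →
      hNorm a h K α β (fun j => y j - yhat j) < δ →
      (∑ i ∈ Finset.range K,
          L (a + i * h) (yhat (i + 1)) (hldiffS a h α yhat i) (hrdiffS a h β yhat i K) * h)
        ≤ ∑ i ∈ Finset.range K,
            L (a + i * h) (y (i + 1)) (hldiffS a h α y i) (hrdiffS a h β y i K) * h)
    (i : ℕ) (hi : i < K - 1) :
    alongH a h α β K Lu yhat i
      + hrdiffS a h α (fun j => alongH a h α β K Lv yhat j) i (K - 1)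
      + hldiffS a h β (fun j => alongH a h α β K Lw yhat j) i = 0 := by
  obtain ⟨δ, hδ, hminy⟩ := hmin
  have hhne : h ≠ 0 := ne_of_gt hh
  have hK2 : 2 ≤ K := by omega
  -- the perturbed functional and its derivative at 0
  have hder : HasDerivAt
      (fun ε : ℝ => ∑ j ∈ Finset.range K,
        L (a + j * h) (yhat (j + 1) + ε * dlt (i + 1) (j + 1))
          (hldiffS a h α yhat j + ε * hldiffS a h α (dlt (i + 1)) j)
          (hrdiffS a h β yhat j K + ε * hrdiffS a h β (dlt (i + 1)) j K) * h)
      (∑ j ∈ Finset.range K,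
        (Lu (a + j * h) (yhat (j + 1)) (hldiffS a h α yhat j) (hrdiffS a h β yhat j K)
            * dlt (i + 1) (j + 1)
          + Lv (a + j * h) (yhat (j + 1)) (hldiffS a h α yhat j) (hrdiffS a h β yhat j K)
            * hldiffS a h α (dlt (i + 1)) j
          + Lw (a + j * h) (yhat (j + 1)) (hldiffS a h α yhat j) (hrdiffS a h β yhat j K)
            * hrdiffS a h β (dlt (i + 1)) j K) * h) 0 := by
    refine HasDerivAt.fun_sum
      (A := fun (j : ℕ) (ε : ℝ) =>
        L (a + j * h) (yhat (j + 1) + ε * dlt (i + 1) (j + 1))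
          (hldiffS a h α yhat j + ε * hldiffS a h α (dlt (i + 1)) j)
          (hrdiffS a h β yhat j K + ε * hrdiffS a h β (dlt (i + 1)) j K) * h)
      (A' := fun (j : ℕ) =>
        (Lu (a + j * h) (yhat (j + 1)) (hldiffS a h α yhat j) (hrdiffS a h β yhat j K)
            * dlt (i + 1) (j + 1)
          + Lv (a + j * h) (yhat (j + 1)) (hldiffS a h α yhat j) (hrdiffS a h β yhat j K)
            * hldiffS a h α (dlt (i + 1)) j
          + Lw (a + j * h) (yhat (j + 1)) (hldiffS a h α yhat j) (hrdiffS a h β yhat j K)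
            * hrdiffS a h β (dlt (i + 1)) j K) * h)
      (fun j _ => ?_)
    have hcu : ContinuousAt (fun P : ℝ × ℝ × ℝ => Lu (a + j * h) P.1 P.2.1 P.2.2)
        (yhat (j + 1), hldiffS a h α yhat j, hrdiffS a h β yhat j K) :=
      (cont3 (Lu (a + j * h)) (Luu (a + j * h)) (Luv (a + j * h)) (Luw (a + j * h))
        (fun u v w => hLuu (a + j * h) u v w) (fun u v w => hLuv (a + j * h) u v w)
        (fun u v w => hLuw (a + j * h) u v w) (hCuu _) (hCuv _)).continuousAt
    have hcvv : Continuous (fun P : ℝ × ℝ => Lvv (a + j * h) (yhat (j + 1)) P.1 P.2) :=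
      (hCvv (a + j * h)).comp (continuous_const.prodMk continuous_id)
    have hcv : ContinuousAt (fun P : ℝ × ℝ => Lv (a + j * h) (yhat (j + 1)) P.1 P.2)
        (hldiffS a h α yhat j, hrdiffS a h β yhat j K) :=
      (cont2 (fun v' w' => Lv (a + j * h) (yhat (j + 1)) v' w')
        (fun v' w' => Lvv (a + j * h) (yhat (j + 1)) v' w')
        (fun v' w' => Lvw (a + j * h) (yhat (j + 1)) v' w')
        (fun v' w' => hLvv (a + j * h) (yhat (j + 1)) v' w')
        (fun v' w' => hLvw (a + j * h) (yhat (j + 1)) v' w') hcvv).continuousAt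
    exact (hasDerivAt_line (L (a + j * h)) (Lu (a + j * h)) (Lv (a + j * h)) (Lw (a + j * h))
      (hLu (a + j * h)) (hLv (a + j * h)) (hLw (a + j * h))
      (yhat (j + 1)) (hldiffS a h α yhat j) (hrdiffS a h β yhat j K)
      (dlt (i + 1) (j + 1)) (hldiffS a h α (dlt (i + 1)) j) (hrdiffS a h β (dlt (i + 1)) j K)
      hcu hcv).mul_const h
  -- the perturbed functional is the original functional of the perturbed trajectory
  have hΦeq : ∀ ε : ℝ, (∑ j ∈ Finset.range K,
      L (a + j * h) (yhat (j + 1) + ε * dlt (i + 1) (j + 1))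
        (hldiffS a h α yhat j + ε * hldiffS a h α (dlt (i + 1)) j)
        (hrdiffS a h β yhat j K + ε * hrdiffS a h β (dlt (i + 1)) j K) * h)
      = ∑ j ∈ Finset.range K,
        L (a + j * h) ((fun n => yhat n + ε * dlt (i + 1) n) (j + 1))
          (hldiffS a h α (fun n => yhat n + ε * dlt (i + 1) n) j)
          (hrdiffS a h β (fun n => yhat n + ε * dlt (i + 1) n) j K) * h := by
    intro ε
    refine Finset.sum_congr rfl fun j _ => ?_
    rw [hldiffS_lin, hrdiffS_lin]
  -- local minimality of the restricted functional
  have hN : 0 ≤ hNorm a h K α β (dlt (i + 1)) := hNorm_nonneg a h K hK α β _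
  have hN1 : 0 < hNorm a h K α β (dlt (i + 1)) + 1 := by linarith
  have hloc : IsLocalMin
      (fun ε : ℝ => ∑ j ∈ Finset.range K,
        L (a + j * h) (yhat (j + 1) + ε * dlt (i + 1) (j + 1))
          (hldiffS a h α yhat j + ε * hldiffS a h α (dlt (i + 1)) j)
          (hrdiffS a h β yhat j K + ε * hrdiffS a h β (dlt (i + 1)) j K) * h) 0 := by
    have hev : ∀ᶠ ε in 𝓝 (0:ℝ),
        (∑ j ∈ Finset.range K,
          L (a + j * h) (yhat (j + 1) + (0:ℝ) * dlt (i + 1) (j + 1))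
            (hldiffS a h α yhat j + (0:ℝ) * hldiffS a h α (dlt (i + 1)) j)
            (hrdiffS a h β yhat j K + (0:ℝ) * hrdiffS a h β (dlt (i + 1)) j K) * h)
        ≤ ∑ j ∈ Finset.range K,
          L (a + j * h) (yhat (j + 1) + ε * dlt (i + 1) (j + 1))
            (hldiffS a h α yhat j + ε * hldiffS a h α (dlt (i + 1)) j)
            (hrdiffS a h β yhat j K + ε * hrdiffS a h β (dlt (i + 1)) j K) * h := by
      rw [Metric.eventually_nhds_iff]
      refine ⟨δ / (hNorm a h K α β (dlt (i + 1)) + 1), div_pos hδ hN1, ?_⟩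
      intro ε hε
      rw [Real.dist_eq, sub_zero] at hε
      have h0 : (∑ j ∈ Finset.range K,
          L (a + j * h) (yhat (j + 1) + (0:ℝ) * dlt (i + 1) (j + 1))
            (hldiffS a h α yhat j + (0:ℝ) * hldiffS a h α (dlt (i + 1)) j)
            (hrdiffS a h β yhat j K + (0:ℝ) * hrdiffS a h β (dlt (i + 1)) j K) * h)
          = ∑ j ∈ Finset.range K,
            L (a + j * h) (yhat (j + 1)) (hldiffS a h α yhat j) (hrdiffS a h β yhat j K) * h := by
        refine Finset.sum_congr rfl fun j _ => ?_
        norm_num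
      have hy0 : (fun n => yhat n + ε * dlt (i + 1) n) 0 = A := by
        simp [dlt, hyA]
      have hyK : (fun n => yhat n + ε * dlt (i + 1) n) K = B := by
        have hne : ¬ (K = i + 1) := by omega
        simp [dlt, hne, hyB]
      have hnorm : hNorm a h K α β
          (fun j => (fun n => yhat n + ε * dlt (i + 1) n) j - yhat j) < δ := by
        have heq2 : (fun j => (fun n => yhat n + ε * dlt (i + 1) n) j - yhat j)
            = fun j => ε * dlt (i + 1) j := by funext j; ring
        rw [heq2]
        calc hNorm a h K α β (fun j => ε * dlt (i + 1) j)
            ≤ |ε| * hNorm a h K α β (dlt (i + 1)) := hNorm_smul_le a h K hK α β ε _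
          _ ≤ |ε| * (hNorm a h K α β (dlt (i + 1)) + 1) := by
              refine mul_le_mul_of_nonneg_left (by linarith) (abs_nonneg ε)
          _ < δ := by
              rw [← lt_div_iff₀ hN1] at *
              exact hε
      have hle := hminy (fun n => yhat n + ε * dlt (i + 1) n) hy0 hyK hnorm
      rw [h0, hΦeq ε]
      exact hle
    exact hev
  have hD0 := hloc.hasDerivAt_eq_zero hder
  -- identities
  have hX : ∑ j ∈ Finset.range K, alongH a h α β K Lu yhat j * dlt (i + 1) (j + 1)
      = alongH a h α β K Lu yhat i := by
    simpa using sum_Lu_id (fun j => alongH a h α β K Lu yhat j) K (i + 1) (by omega) (by omega)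
  have hY : ∑ j ∈ Finset.range K, alongH a h α β K Lv yhat j * hldiffS a h α (dlt (i + 1)) j
      = hrdiffS a h α (fun j => alongH a h α β K Lv yhat j) i (K - 1) := by
    simpa using sum_Lv_id a h hhne α (fun j => alongH a h α β K Lv yhat j) K (i + 1)
      (by omega) (by omega)
  have hZ : ∑ j ∈ Finset.range K, alongH a h α β K Lw yhat j * hrdiffS a h β (dlt (i + 1)) j K
      = hldiffS a h β (fun j => alongH a h α β K Lw yhat j) i := by
    simpa using sum_Lw_id a h β (fun j => alongH a h α β K Lw yhat j) K (i + 1)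
      (by omega) (by omega)
  have hconv : (∑ j ∈ Finset.range K,
      (Lu (a + j * h) (yhat (j + 1)) (hldiffS a h α yhat j) (hrdiffS a h β yhat j K)
          * dlt (i + 1) (j + 1)
        + Lv (a + j * h) (yhat (j + 1)) (hldiffS a h α yhat j) (hrdiffS a h β yhat j K)
          * hldiffS a h α (dlt (i + 1)) j
        + Lw (a + j * h) (yhat (j + 1)) (hldiffS a h α yhat j) (hrdiffS a h β yhat j K)
          * hrdiffS a h β (dlt (i + 1)) j K) * h)
      = ((∑ j ∈ Finset.range K, alongH a h α β K Lu yhat j * dlt (i + 1) (j + 1))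
        + (∑ j ∈ Finset.range K, alongH a h α β K Lv yhat j * hldiffS a h α (dlt (i + 1)) j)
        + (∑ j ∈ Finset.range K, alongH a h α β K Lw yhat j * hrdiffS a h β (dlt (i + 1)) j K))
        * h := by
    simp only [alongH]
    rw [add_mul, add_mul, Finset.sum_mul, Finset.sum_mul, Finset.sum_mul,
      ← Finset.sum_add_distrib, ← Finset.sum_add_distrib]
    exact Finset.sum_congr rfl fun j _ => by ring
  rw [hconv, hX, hY, hZ] at hD0
  exact (mul_eq_zero.1 hD0).resolve_right hhne
end

section
/- Let a ∈ ℝ, ℕ_a = {a, a+1, a+2, …}, γ ∈ [0,1], and α₁, α₂, β₁, β₂ > 0. Then for every f : ℕ_a → ℝ and every t ∈ ℕ_a: ( _γ◇_a^{−α₁,−β₁} ( _γ◇_a^{−α₂,−β₂} f ) )(t) = γ ( _γ◇_a^{−(α₁+α₂),−(β₁+α₂)} f )(t) + (1−γ) ( _γ◇_a^{−(α₁+β₂),−(β₁+β₂)} f )(t). -/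
/-- The falling factorial `x^{(y)} = Γ(x+1)/Γ(x+1−y)`. -/
noncomputable def ffall (x y : ℝ) : ℝ := Real.Gamma (x + 1) / Real.Gamma (x + 1 - y)

/-- The rising factorial `x^{\overline{y}} = Γ(x+y)/Γ(x)`. -/
noncomputable def frise (x y : ℝ) : ℝ := Real.Gamma (x + y) / Real.Gamma x

/-- The delta (Miller–Ross) fractional sum `(Δ_a^{−α} f)(t+α)` at `t = a + n`,
for `f : ℕ_a → ℝ` represented by the sequence `f : ℕ → ℝ`, `f j = f(a + j)`. -/
noncomputable def deltaSum (α : ℝ) (f : ℕ → ℝ) (n : ℕ) : ℝ :=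
  (1 / Real.Gamma α) *
    ∑ j ∈ Finset.range (n + 1), ffall ((n : ℝ) + α - j - 1) (α - 1) * f j

/-- The nabla fractional sum `(∇_a^{−β} f)(t)` at `t = a + n`. -/
noncomputable def nablaSum (β : ℝ) (f : ℕ → ℝ) (n : ℕ) : ℝ :=
  (1 / Real.Gamma β) *
    ∑ j ∈ Finset.range (n + 1), frise ((n : ℝ) - j + 1) (β - 1) * f j

/-- The diamond-γ fractional sum of order `(α, β)`. -/
noncomputable def diamond (γ α β : ℝ) (f : ℕ → ℝ) (n : ℕ) : ℝ :=
  γ * deltaSum α f n + (1 - γ) * nablaSum β f n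

/-! ### Auxiliary machinery -/

/-- Rising factorial as a finite product. -/
noncomputable def pochh (x : ℝ) : ℕ → ℝ
  | 0 => 1
  | m + 1 => pochh x m * (x + m)

lemma Gamma_add_nat {x : ℝ} (hx : 0 < x) (m : ℕ) :
    Real.Gamma (x + m) = pochh x m * Real.Gamma x := by
  induction m with
  | zero => simp [pochh]
  | succ m ih =>
    have h : x + ((m : ℕ) + 1 : ℕ) = (x + m) + 1 := by push_cast; ring
    have hne : x + (m : ℝ) ≠ 0 := ne_of_gt (by positivity)
    rw [h, Real.Gamma_add_one hne, ih, pochh]; ring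

/-- Chu–Vandermonde identity for rising factorials. -/
lemma pochh_vandermonde (x y : ℝ) : ∀ M : ℕ,
    ∑ m ∈ Finset.range (M + 1),
      (M.choose m : ℝ) * (pochh x m * pochh y (M - m)) = pochh (x + y) M := by
  intro M
  induction M with
  | zero => simp [pochh]
  | succ M ih =>
    have key : ∀ i ∈ Finset.range (M + 1),
        (M.choose i : ℝ) * (pochh x i * pochh y (M - i)) * (x + y + M)
        = (M.choose i : ℝ) * (pochh x (i + 1) * pochh y (M - i))
          + (M.choose i : ℝ) * (pochh x i * pochh y (M - i + 1)) := by
      intro i hi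
      have hiM : i ≤ M := Nat.lt_succ_iff.mp (Finset.mem_range.mp hi)
      have hc : ((M - i : ℕ) : ℝ) = (M : ℝ) - i := by
        rw [Nat.cast_sub hiM]
      simp only [pochh, hc]; ring
    have h1 : pochh (x + y) (M + 1)
        = ∑ i ∈ Finset.range (M + 1),
          ((M.choose i : ℝ) * (pochh x (i + 1) * pochh y (M - i))
            + (M.choose i : ℝ) * (pochh x i * pochh y (M - i + 1))) := by
      rw [← Finset.sum_congr rfl key, ← Finset.sum_mul, ih]
      show pochh (x + y) M * (x + y + M) = pochh (x + y) M * ((x + y) + M)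
      ring
    rw [Finset.sum_range_succ'
      (fun m => ((M + 1).choose m : ℝ) * (pochh x m * pochh y (M + 1 - m))) (M + 1), h1]
    have h2 : ∀ i ∈ Finset.range (M + 1),
        (((M + 1).choose (i + 1) : ℝ)) * (pochh x (i + 1) * pochh y (M + 1 - (i + 1)))
          = (M.choose i : ℝ) * (pochh x (i + 1) * pochh y (M - i))
            + (M.choose (i + 1) : ℝ) * (pochh x (i + 1) * pochh y (M - i)) := by
      intro i _
      have : M + 1 - (i + 1) = M - i := Nat.succ_sub_succ M i
      rw [this, Nat.choose_succ_succ, Nat.cast_add]; ring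
    rw [Finset.sum_congr rfl h2, Finset.sum_add_distrib]
    -- remaining: second sum + f 0 = ∑ C(M,i) pochh x i pochh y (M-i+1)
    have h3 : (∑ i ∈ Finset.range (M + 1),
          (M.choose (i + 1) : ℝ) * (pochh x (i + 1) * pochh y (M - i)))
        + ((M + 1).choose 0 : ℝ) * (pochh x 0 * pochh y (M + 1 - 0))
        = ∑ i ∈ Finset.range (M + 1),
          (M.choose i : ℝ) * (pochh x i * pochh y (M - i + 1)) := by
      rw [Finset.sum_range_succ
        (fun i => (M.choose (i + 1) : ℝ) * (pochh x (i + 1) * pochh y (M - i)))]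
      simp only [Nat.choose_succ_self, Nat.cast_zero, zero_mul, add_zero]
      rw [Finset.sum_range_succ'
        (fun i => (M.choose i : ℝ) * (pochh x i * pochh y (M - i + 1)))]
      congr 1
      · refine Finset.sum_congr rfl ?_
        intro i hi
        have hiM : i < M := Finset.mem_range.mp hi
        have : M - (i + 1) + 1 = M - i := by omega
        rw [this]
      · simp [pochh]
    rw [add_assoc, h3, ← Finset.sum_add_distrib]

/-- The common kernel of the delta and nabla fractional sums. -/
noncomputable def ker (β : ℝ) (m : ℕ) : ℝ := Real.Gamma (β + m) / (m.factorial : ℝ)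

/-- The common operator. -/
noncomputable def S (β : ℝ) (f : ℕ → ℝ) (n : ℕ) : ℝ :=
  (1 / Real.Gamma β) * ∑ j ∈ Finset.range (n + 1), ker β (n - j) * f j

lemma nablaSum_eq_S (β : ℝ) (f : ℕ → ℝ) (n : ℕ) : nablaSum β f n = S β f n := by
  unfold nablaSum S
  congr 1
  refine Finset.sum_congr rfl ?_
  intro j hj
  have hjn : j ≤ n := Nat.lt_succ_iff.mp (Finset.mem_range.mp hj)
  have hc : ((n - j : ℕ) : ℝ) = (n : ℝ) - j := Nat.cast_sub hjn
  congr 1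
  unfold frise ker
  rw [show (n : ℝ) - j + 1 + (β - 1) = β + ((n - j : ℕ) : ℝ) by rw [hc]; ring,
    show (n : ℝ) - j + 1 = ((n - j : ℕ) : ℝ) + 1 by rw [hc],
    Real.Gamma_nat_eq_factorial]

lemma deltaSum_eq_S (α : ℝ) (f : ℕ → ℝ) (n : ℕ) : deltaSum α f n = S α f n := by
  unfold deltaSum S
  congr 1
  refine Finset.sum_congr rfl ?_
  intro j hj
  have hjn : j ≤ n := Nat.lt_succ_iff.mp (Finset.mem_range.mp hj)
  have hc : ((n - j : ℕ) : ℝ) = (n : ℝ) - j := Nat.cast_sub hjn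
  congr 1
  unfold ffall ker
  rw [show (n : ℝ) + α - j - 1 + 1 = α + ((n - j : ℕ) : ℝ) by rw [hc]; ring,
    show α + ((n - j : ℕ) : ℝ) - (α - 1) = ((n - j : ℕ) : ℝ) + 1 by ring,
    Real.Gamma_nat_eq_factorial]

/-- Gamma-kernel convolution identity. -/
lemma ker_conv {b₁ b₂ : ℝ} (h₁ : 0 < b₁) (h₂ : 0 < b₂) (M : ℕ) :
    ∑ m ∈ Finset.range (M + 1), ker b₁ (M - m) * ker b₂ m
      = (Real.Gamma b₁ * Real.Gamma b₂ / Real.Gamma (b₁ + b₂)) * ker (b₁ + b₂) M := by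
  have hG1 : (0:ℝ) < Real.Gamma b₁ := Real.Gamma_pos_of_pos h₁
  have hG2 : (0:ℝ) < Real.Gamma b₂ := Real.Gamma_pos_of_pos h₂
  have hG12 : (0:ℝ) < Real.Gamma (b₁ + b₂) := Real.Gamma_pos_of_pos (by linarith)
  have key : ∀ m ∈ Finset.range (M + 1),
      ker b₁ (M - m) * ker b₂ m
        = (Real.Gamma b₁ * Real.Gamma b₂ / (M.factorial : ℝ)) *
          ((M.choose m : ℝ) * (pochh b₂ m * pochh b₁ (M - m))) := by
    intro m hm
    have hmM : m ≤ M := Nat.lt_succ_iff.mp (Finset.mem_range.mp hm)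
    have hfac : ((M.choose m : ℕ) : ℝ) * (m.factorial : ℝ) * ((M - m).factorial : ℝ)
        = (M.factorial : ℝ) := by
      exact_mod_cast congrArg (Nat.cast : ℕ → ℝ)
        (Nat.choose_mul_factorial_mul_factorial hmM)
    unfold ker
    rw [Gamma_add_nat h₁, Gamma_add_nat h₂, Nat.cast_choose ℝ hmM]
    have hf1 : ((m.factorial : ℕ) : ℝ) ≠ 0 := by positivity
    have hf2 : (((M - m).factorial : ℕ) : ℝ) ≠ 0 := by positivity
    have hfM : ((M.factorial : ℕ) : ℝ) ≠ 0 := by positivity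
    field_simp
  rw [Finset.sum_congr rfl key, ← Finset.mul_sum, pochh_vandermonde b₂ b₁ M]
  unfold ker
  rw [Gamma_add_nat (by linarith : (0:ℝ) < b₁ + b₂)]
  have hfM : ((M.factorial : ℕ) : ℝ) ≠ 0 := by positivity
  rw [show b₂ + b₁ = b₁ + b₂ by ring]
  field_simp

/-- Linearity of `S` in the function argument. -/
lemma S_lin (b c d : ℝ) (g h : ℕ → ℝ) (n : ℕ) :
    S b (fun k => c * g k + d * h k) n = c * S b g n + d * S b h n := by
  unfold S
  rw [Finset.sum_congr rfl (fun j _ => by ring :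
    ∀ j ∈ Finset.range (n + 1), ker b (n - j) * (c * g j + d * h j)
      = c * (ker b (n - j) * g j) + d * (ker b (n - j) * h j)),
    Finset.sum_add_distrib, ← Finset.mul_sum, ← Finset.mul_sum]
  ring

/-- Semigroup property of `S`. -/
lemma S_comp {b₁ b₂ : ℝ} (h₁ : 0 < b₁) (h₂ : 0 < b₂) (f : ℕ → ℝ) (n : ℕ) :
    S b₁ (S b₂ f) n = S (b₁ + b₂) f n := by
  have hG1 : (0:ℝ) < Real.Gamma b₁ := Real.Gamma_pos_of_pos h₁
  have hG2 : (0:ℝ) < Real.Gamma b₂ := Real.Gamma_pos_of_pos h₂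
  have hG12 : (0:ℝ) < Real.Gamma (b₁ + b₂) := Real.Gamma_pos_of_pos (by linarith)
  have step1 : S b₁ (S b₂ f) n
      = (1 / Real.Gamma b₁) * ((1 / Real.Gamma b₂) *
          ∑ j ∈ Finset.range (n + 1), ∑ k ∈ Finset.range (j + 1),
            (ker b₁ (n - j) * ker b₂ (j - k)) * f k) := by
    simp only [S, Finset.mul_sum]
    refine Finset.sum_congr rfl fun j _ => ?_
    refine Finset.sum_congr rfl fun k _ => ?_
    ring
  have swap : ∑ j ∈ Finset.range (n + 1), ∑ k ∈ Finset.range (j + 1),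
        (ker b₁ (n - j) * ker b₂ (j - k)) * f k
      = ∑ k ∈ Finset.range (n + 1), ∑ j ∈ Finset.Ico k (n + 1),
          (ker b₁ (n - j) * ker b₂ (j - k)) * f k := by
    have h := Finset.sum_Ico_Ico_comm (M := ℝ) 0 (n + 1)
      (fun k j => (ker b₁ (n - j) * ker b₂ (j - k)) * f k)
    rw [← Finset.range_eq_Ico] at h
    refine Eq.trans (Finset.sum_congr rfl fun j _ => ?_) h.symm
    rw [Finset.range_eq_Ico]
  have inner : ∀ k ∈ Finset.range (n + 1),
      ∑ j ∈ Finset.Ico k (n + 1), (ker b₁ (n - j) * ker b₂ (j - k)) * f k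
      = ((Real.Gamma b₁ * Real.Gamma b₂ / Real.Gamma (b₁ + b₂)) *
          ker (b₁ + b₂) (n - k)) * f k := by
    intro k hk
    rw [← Finset.sum_mul]
    congr 1
    have hre : ∑ j ∈ Finset.Ico k (n + 1), ker b₁ (n - j) * ker b₂ (j - k)
        = ∑ m ∈ Finset.range (n - k + 1), ker b₁ (n - k - m) * ker b₂ m := by
      rw [Finset.sum_Ico_eq_sum_range]
      rw [show n + 1 - k = n - k + 1 from by
        have := Nat.lt_succ_iff.mp (Finset.mem_range.mp hk); omega]
      refine Finset.sum_congr rfl fun m _ => ?_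
      rw [show n - (k + m) = n - k - m from by omega,
        show k + m - k = m from by omega]
    rw [hre, ker_conv h₁ h₂ (n - k)]
  rw [step1, swap, Finset.sum_congr rfl inner]
  have final : ∑ k ∈ Finset.range (n + 1),
      ((Real.Gamma b₁ * Real.Gamma b₂ / Real.Gamma (b₁ + b₂)) * ker (b₁ + b₂) (n - k)) * f k
      = (Real.Gamma b₁ * Real.Gamma b₂ / Real.Gamma (b₁ + b₂)) *
        ∑ k ∈ Finset.range (n + 1), ker (b₁ + b₂) (n - k) * f k := by
    rw [Finset.mul_sum]
    exact Finset.sum_congr rfl fun k _ => by ring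
  rw [final]
  unfold S
  field_simp

/-- composition rule for the diamond-γ fractional sums on
`ℕ_a = {a, a+1, …}` (points `t = a + n`). -/
theorem stmt18 (a : ℝ) (γ α₁ α₂ β₁ β₂ : ℝ) (hγ0 : 0 ≤ γ) (hγ1 : γ ≤ 1)
    (hα₁ : 0 < α₁) (hα₂ : 0 < α₂) (hβ₁ : 0 < β₁) (hβ₂ : 0 < β₂)
    (f : ℕ → ℝ) (n : ℕ) :
    diamond γ α₁ β₁ (diamond γ α₂ β₂ f) n
      = γ * diamond γ (α₁ + α₂) (β₁ + α₂) f n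
        + (1 - γ) * diamond γ (α₁ + β₂) (β₁ + β₂) f n := by
  have hd : diamond γ α₂ β₂ f = fun k => γ * S α₂ f k + (1 - γ) * S β₂ f k := by
    funext k
    simp only [diamond, deltaSum_eq_S, nablaSum_eq_S]
  simp only [diamond, deltaSum_eq_S, nablaSum_eq_S, hd, S_lin,
    S_comp hα₁ hα₂, S_comp hα₁ hβ₂, S_comp hβ₁ hα₂, S_comp hβ₁ hβ₂]
  ring
end
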